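/- arXiv:2502.00867 — 3 statements merged into one kernel-verified Lean document; each statement's English description precedes it below -/
import Mathlib

section
/- Let D be an Eulerian digraph such that T(D) has a unique minimal element (i.e., D has a unique partition of its edge set into directed cycles). Then T(D) is closed under the meet operation of Π(E(D)), and hence (T(D), ∨, ∧) is a lattice. -/
/-- `l` is a nonempty closed directed trail in the digraph with edge type `E` and
endpoint maps `src`, `tgt`: the edges are distinct and consecutive (cyclically). -/
def IsClosedTrail {V E : Type*} (src tgt : E → V) (l : List E) : Prop :=
  l ≠ [] ∧ l.Nodup ∧ List.Chain' (fun e f => tgt e = src f) l ∧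
  ∀ h : l ≠ [], tgt (l.getLast h) = src (l.head h)

/-- `l` is an Eulerian closed trail of the subdigraph with edge set `A`. -/
def IsEulerianOn {V E : Type*} (src tgt : E → V) (A : Set E) (l : List E) : Prop :=
  IsClosedTrail src tgt l ∧ ∀ e, e ∈ l ↔ e ∈ A

/-- The edge set `A` is the edge set of a (connected) Eulerian subdigraph. -/
def IsEulerianSet {V E : Type*} (src tgt : E → V) (A : Set E) : Prop :=
  ∃ l, IsEulerianOn src tgt A l

/-- The number of Eulerian circuits of the subdigraph with edge set `A`: Eulerian closed
trails up to cyclic rotation of the edges. -/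
noncomputable def numEC {V E : Type*} (src tgt : E → V) (A : Set E) : ℕ :=
  Nat.card (Quot fun l₁ l₂ : {l : List E // IsEulerianOn src tgt A l} =>
    ∃ m, (l₂ : List E) = (l₁ : List E).rotate m)

/-- The edge set `A` is the edge set of a directed cycle (an Eulerian closed trail with
no repeated vertices). -/
def IsCycleSet {V E : Type*} (src tgt : E → V) (A : Set E) : Prop :=
  ∃ l, IsEulerianOn src tgt A l ∧ (l.map src).Nodup

/-- The partition (setoid) `s` of the edge set partitions it into blocks each of which is
the edge set of a connected Eulerian subdigraph; these are the elements of `T(D)`. -/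
def EulerianPartition {V E : Type*} (src tgt : E → V) (s : Setoid E) : Prop :=
  ∀ x : E, IsEulerianSet src tgt {y | s.r x y}

/- ### Auxiliary machinery -/

open List

set_option linter.unusedSectionVars false

section EulerAux

variable {V E : Type*} [DecidableEq V] [DecidableEq E] [Fintype E] (src tgt : E → V)

lemma count_src_tgt : ∀ (l : List E), l.Chain' (fun e f => tgt e = src f) → ∀ (hne : l ≠ []) (v : V),
    ((l.map src).count v + (if tgt (l.getLast hne) = v then 1 else 0)
      = (l.map tgt).count v + (if src (l.head hne) = v then 1 else 0))
  | [] => by intro _ h; exact absurd rfl h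
  | [e] => by
      intro _ _ v
      simp only [map_cons, map_nil, getLast_singleton, head_cons, count_cons, count_nil,
        beq_iff_eq]
      grind
  | e :: f :: r => by
      intro hc hne v
      have h1 : tgt e = src f := (isChain_cons_cons.mp hc).1
      have IH := count_src_tgt (f :: r) (isChain_cons_cons.mp hc).2 (cons_ne_nil f r) v
      have hgl : (e :: f :: r).getLast hne = (f :: r).getLast (cons_ne_nil f r) :=
        getLast_cons (cons_ne_nil f r)
      rw [hgl]
      simp only [map_cons, head_cons, count_cons, beq_iff_eq] at IH ⊢
      rw [h1]
      grind

/-- A multiset of edges is balanced if at every vertex the out-degree equals in-degree. -/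
def EBalanced (M : Multiset E) : Prop :=
  ∀ v : V, (M.map src).count v = (M.map tgt).count v

lemma balanced_coe {l : List E} (h : IsClosedTrail src tgt l) : EBalanced src tgt (↑l) := by
  rcases h with ⟨hne, _, hc, hw⟩
  intro v
  have hcount := count_src_tgt src tgt l hc hne v
  rw [hw hne] at hcount
  have : (l.map src).count v = (l.map tgt).count v := by omega
  simpa [Multiset.map_coe, Multiset.coe_count] using this

lemma EBalanced.sub {S T : Multiset E} (hS : EBalanced src tgt S) (hT : EBalanced src tgt T)
    (hle : T ≤ S) : EBalanced src tgt (S - T) := by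
  intro v
  have h2 : ∀ (g : E → V), (S - T).map g + T.map g = S.map g := by
    intro g; rw [← Multiset.map_add, tsub_add_cancel_of_le hle]
  have h3 := congrArg (Multiset.count v) (h2 src)
  have h4 := congrArg (Multiset.count v) (h2 tgt)
  simp only [Multiset.count_add] at h3 h4
  have := hS v; have := hT v
  omega

lemma EBalanced.add {S T : Multiset E} (hS : EBalanced src tgt S) (hT : EBalanced src tgt T) :
    EBalanced src tgt (S + T) := by
  intro v
  simp only [Multiset.map_add, Multiset.count_add, hS v, hT v]

lemma exists_cycle_aux {S : Multiset E} (hS : EBalanced src tgt S) :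
    ∀ (n : ℕ) (l : List E) (hne : l ≠ []),
    l.Chain' (fun e f => tgt e = src f) → (l.map src).Nodup → ↑l ≤ S →
    S.card - l.length ≤ n →
    ∃ c : List E, IsClosedTrail src tgt c ∧ (c.map src).Nodup ∧ ↑c ≤ S := by
  intro n
  induction n with
  | zero =>
    intro l hne hc hnd hle hcard
    by_cases hv : tgt (l.getLast hne) ∈ l.map src
    · obtain ⟨g, hgl, hgv⟩ := mem_map.mp hv
      obtain ⟨l₁, l₂, rfl⟩ := append_of_mem hgl
      refine ⟨g :: l₂, ⟨cons_ne_nil _ _, ?_, ?_, ?_⟩, ?_, ?_⟩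
      · exact (hnd.of_map src).sublist (sublist_append_right l₁ _)
      · exact hc.suffix ⟨l₁, rfl⟩
      · intro h
        rw [show (g :: l₂).getLast h = (l₁ ++ g :: l₂).getLast hne from
          (getLast_append_of_right_ne_nil l₁ (g :: l₂) h).symm]
        simpa using hgv.symm
      · exact hnd.sublist ((sublist_append_right l₁ _).map src)
      · exact le_trans (by exact_mod_cast (sublist_append_right l₁ (g :: l₂)).subperm) hle
    · exfalso
      have hvh : ¬ (src (l.head hne) = tgt (l.getLast hne)) := by
        intro h
        exact hv (h ▸ mem_map_of_mem (f := src) (head_mem hne))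
      have hcount := count_src_tgt src tgt l hc hne (tgt (l.getLast hne))
      have h0 : (l.map src).count (tgt (l.getLast hne)) = 0 :=
        count_eq_zero.mpr hv
      rw [if_pos rfl, if_neg hvh, h0] at hcount
      have h1 : 0 < (S.map tgt).count (tgt (l.getLast hne)) := by
        have : 0 < ((↑l : Multiset E).map tgt).count (tgt (l.getLast hne)) := by
          simpa [Multiset.map_coe, Multiset.coe_count] using Nat.lt_of_lt_of_le Nat.zero_lt_one
            (le_of_eq hcount)
        exact lt_of_lt_of_le this (Multiset.count_le_of_le _ (Multiset.map_le_map hle))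
      rw [← hS] at h1
      obtain ⟨g, hgS, hgv⟩ := Multiset.mem_map.mp (Multiset.count_pos.mp h1)
      have hgl : g ∉ l := fun h => hv (hgv ▸ mem_map_of_mem (f := src) h)
      have hle' : (↑(l ++ [g]) : Multiset E) ≤ S := by
        rw [Multiset.le_iff_count]
        intro x
        by_cases hx : x = g
        · subst hx
          have hcx : (↑(l ++ [x]) : Multiset E).count x = 1 := by
            simp [Multiset.coe_count, count_append, count_eq_zero.mpr hgl]
          rw [hcx]
          exact Multiset.one_le_count_iff_mem.mpr hgS
        · have : (↑(l ++ [g]) : Multiset E).count x = (↑l : Multiset E).count x := by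
            simp [Multiset.coe_count, count_append, hx, List.count_singleton', Ne.symm hx]
          rw [this]
          exact le_trans (Multiset.count_le_of_le x hle) le_rfl
      have := Multiset.card_le_card hle'
      simp at this
      omega
  | succ n IH =>
    intro l hne hc hnd hle hcard
    by_cases hv : tgt (l.getLast hne) ∈ l.map src
    · obtain ⟨g, hgl, hgv⟩ := mem_map.mp hv
      obtain ⟨l₁, l₂, rfl⟩ := append_of_mem hgl
      refine ⟨g :: l₂, ⟨cons_ne_nil _ _, ?_, ?_, ?_⟩, ?_, ?_⟩
      · exact (hnd.of_map src).sublist (sublist_append_right l₁ _)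
      · exact hc.suffix ⟨l₁, rfl⟩
      · intro h
        rw [show (g :: l₂).getLast h = (l₁ ++ g :: l₂).getLast hne from
          (getLast_append_of_right_ne_nil l₁ (g :: l₂) h).symm]
        simpa using hgv.symm
      · exact hnd.sublist ((sublist_append_right l₁ _).map src)
      · exact le_trans (by exact_mod_cast (sublist_append_right l₁ (g :: l₂)).subperm) hle
    · have hvh : ¬ (src (l.head hne) = tgt (l.getLast hne)) := by
        intro h
        exact hv (h ▸ mem_map_of_mem (f := src) (head_mem hne))
      have hcount := count_src_tgt src tgt l hc hne (tgt (l.getLast hne))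
      have h0 : (l.map src).count (tgt (l.getLast hne)) = 0 :=
        count_eq_zero.mpr hv
      rw [if_pos rfl, if_neg hvh, h0] at hcount
      have h1 : 0 < (S.map tgt).count (tgt (l.getLast hne)) := by
        have : 0 < ((↑l : Multiset E).map tgt).count (tgt (l.getLast hne)) := by
          simpa [Multiset.map_coe, Multiset.coe_count] using Nat.lt_of_lt_of_le Nat.zero_lt_one
            (le_of_eq hcount)
        exact lt_of_lt_of_le this (Multiset.count_le_of_le _ (Multiset.map_le_map hle))
      rw [← hS] at h1
      obtain ⟨g, hgS, hgv⟩ := Multiset.mem_map.mp (Multiset.count_pos.mp h1)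
      have hgl : g ∉ l := fun h => hv (hgv ▸ mem_map_of_mem (f := src) h)
      have hle' : (↑(l ++ [g]) : Multiset E) ≤ S := by
        rw [Multiset.le_iff_count]
        intro x
        by_cases hx : x = g
        · subst hx
          have hcx : (↑(l ++ [x]) : Multiset E).count x = 1 := by
            simp [Multiset.coe_count, count_append, count_eq_zero.mpr hgl]
          rw [hcx]
          exact Multiset.one_le_count_iff_mem.mpr hgS
        · have : (↑(l ++ [g]) : Multiset E).count x = (↑l : Multiset E).count x := by
            simp [Multiset.coe_count, count_append, hx, List.count_singleton', Ne.symm hx]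
          rw [this]
          exact le_trans (Multiset.count_le_of_le x hle) le_rfl
      refine IH (l ++ [g]) (by simp) ?_ ?_ hle' ?_
      · refine isChain_append.mpr ⟨hc, isChain_singleton g, ?_⟩
        intro a ha b hb
        simp only [head?_cons, Option.mem_def, Option.some.injEq] at hb
        subst hb
        rw [getLast?_eq_getLast hne] at ha
        simp only [Option.mem_def, Option.some.injEq] at ha
        subst ha
        exact hgv.symm
      · rw [map_append]
        simp only [map_cons, map_nil]
        refine (nodup_append').mpr ⟨hnd, nodup_singleton _, ?_⟩
        intro a haa hab
        simp only [mem_singleton] at hab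
        subst hab
        exact hv (hgv ▸ haa)
      · simp only [length_append, length_cons, length_nil]
        omega

lemma exists_cycle {S : Multiset E} (hS : EBalanced src tgt S) (hne : S ≠ 0) :
    ∃ c : List E, IsClosedTrail src tgt c ∧ (c.map src).Nodup ∧ ↑c ≤ S := by
  obtain ⟨e, he⟩ := Multiset.exists_mem_of_ne_zero hne
  exact exists_cycle_aux src tgt hS S.card [e] (by simp) (isChain_singleton e) (by simp)
    (by simpa using Multiset.singleton_le.mpr he) (by omega)

lemma exists_partition_fun (S : Finset E) : EBalanced src tgt S.val →
    ∃ F : E → List E, ∀ x ∈ S, x ∈ F x ∧ IsClosedTrail src tgt (F x) ∧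
      ((F x).map src).Nodup ∧ ∀ y ∈ F x, y ∈ S ∧ F y = F x := by
  induction S using Finset.strongInduction with
  | _ S IH =>
    intro hbal
    by_cases hS : S = ∅
    · exact ⟨fun _ => [], by simp [hS]⟩
    · have hne : S.val ≠ 0 := by
        simpa [Finset.val_eq_zero] using hS
      obtain ⟨c, hcT, hcnd, hcle⟩ := exists_cycle src tgt hbal hne
      have hcnodup : c.Nodup := hcT.2.1
      have hCval : c.toFinset.val = (↑c : Multiset E) := by
        exact Multiset.dedup_eq_self.mpr (Multiset.coe_nodup.mpr hcnodup)
      have hCS : c.toFinset ⊆ S := by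
        intro x hx
        exact Multiset.mem_of_le hcle (by simpa using hx)
      have hcne : c.toFinset.Nonempty := by
        obtain ⟨e, he⟩ := List.exists_mem_of_ne_nil c hcT.1
        exact ⟨e, List.mem_toFinset.mpr he⟩
      have hlt : S \ c.toFinset ⊂ S := Finset.sdiff_ssubset hCS hcne
      have hS'bal : EBalanced src tgt (S \ c.toFinset).val := by
        rw [Finset.sdiff_val, hCval]
        exact EBalanced.sub src tgt hbal (balanced_coe src tgt hcT) (hCval ▸ hcle)
      obtain ⟨F', hF'⟩ := IH _ hlt hS'bal
      refine ⟨fun x => if x ∈ c then c else F' x, ?_⟩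
      intro x hx
      by_cases hxc : x ∈ c
      · refine ⟨by simp [hxc], by simp [hxc, hcT], by simp [hxc, hcnd], ?_⟩
        intro y hy
        have hy' : y ∈ c := by simpa [hxc] using hy
        exact ⟨hCS (List.mem_toFinset.mpr hy'), by simp [hxc, hy']⟩
      · have hxS' : x ∈ S \ c.toFinset := by
          simp [Finset.mem_sdiff, hx, hxc]
        obtain ⟨h1, h2, h3, h4⟩ := hF' x hxS'
        refine ⟨by simpa [hxc] using h1, by simpa [hxc] using h2, by simpa [hxc] using h3, ?_⟩
        intro y hy
        have hy' : y ∈ F' x := by simpa [hxc] using hy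
        obtain ⟨hyS', hyF⟩ := h4 y hy'
        have hyc : y ∉ c := by
          have := (Finset.mem_sdiff.mp hyS').2
          simpa using this
        exact ⟨(Finset.mem_sdiff.mp hyS').1, by simp [hxc, hyc, hyF]⟩

lemma exists_cycle_refinement (u : Setoid E)
    (hu : ∀ z : E, ∃ M : Multiset E, M.Nodup ∧ (∀ a, a ∈ M ↔ u.r z a) ∧ EBalanced src tgt M) :
    ∃ c : Setoid E, c ≤ u ∧
      ∀ x : E, ∃ l, IsEulerianOn src tgt {y | c.r x y} l ∧ (l.map src).Nodup := by
  classical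
  set K : E → Finset E := fun x => Finset.univ.filter (u.r x ·) with hK
  have hKbal : ∀ x : E, EBalanced src tgt (K x).val := by
    intro x
    obtain ⟨M, hMnd, hMmem, hMbal⟩ := hu x
    have : (K x).val = M := by
      rw [Multiset.Nodup.ext (K x).nodup hMnd]
      intro a
      simp only [hK, Finset.mem_val, Finset.mem_filter, Finset.mem_univ, true_and]
      exact (hMmem a).symm
    rw [this]; exact hMbal
  have hKeq : ∀ {x y}, u.r x y → K x = K y := by
    intro x y h
    ext z
    simp only [hK, Finset.mem_filter, Finset.mem_univ, true_and]
    exact ⟨fun hz => u.trans (u.symm h) hz, fun hz => u.trans h hz⟩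
  set P : Finset E → E → List E := fun S =>
    if h : EBalanced src tgt S.val then Classical.choose (exists_partition_fun src tgt S h)
    else fun _ => [] with hP
  set G : E → List E := fun x => P (K x) x with hG
  have hPK : ∀ x : E, ∀ z ∈ K x, z ∈ P (K x) z ∧ IsClosedTrail src tgt (P (K x) z) ∧
      ((P (K x) z).map src).Nodup ∧ ∀ y ∈ P (K x) z, y ∈ K x ∧ P (K x) y = P (K x) z := by
    intro x
    have := Classical.choose_spec (exists_partition_fun src tgt (K x) (hKbal x))
    simpa [hP, dif_pos (hKbal x)] using this
  have hxK : ∀ x : E, x ∈ K x := by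
    intro x; simp [hK, Finset.mem_filter]
  have hmemu : ∀ x y, y ∈ G x → u.r x y := by
    intro x y hy
    have := ((hPK x x (hxK x)).2.2.2 y hy).1
    simpa [hK, Finset.mem_filter] using this
  have hGeq : ∀ x y, y ∈ G x → G y = G x := by
    intro x y hy
    have hxy : u.r x y := hmemu x y hy
    have h2 := ((hPK x x (hxK x)).2.2.2 y hy).2
    simp only [hG]
    rw [hKeq hxy] at *
    exact h2
  refine ⟨⟨fun a b => G a = G b, ⟨fun _ => rfl, Eq.symm, Eq.trans⟩⟩, ?_, ?_⟩
  · rw [Setoid.le_def]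
    intro a b hab
    have hb : b ∈ G b := (hPK b b (hxK b)).1
    have : b ∈ G a := by
      have h3 : G a = G b := hab
      rw [h3]; exact hb
    exact hmemu a b this
  · intro x
    refine ⟨G x, ⟨(hPK x x (hxK x)).2.1, ?_⟩, (hPK x x (hxK x)).2.2.1⟩
    intro e
    constructor
    · intro he
      show G x = G e
      exact (hGeq x e he).symm
    · intro he
      have h3 : G x = G e := he
      rw [h3]
      exact (hPK e e (hxK e)).1

lemma get_congr (l : List E) {a b : ℕ} (ha : a < l.length) (hb : b < l.length) (h : a = b) :
    l.get ⟨a, ha⟩ = l.get ⟨b, hb⟩ := by subst h; rfl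

lemma closed_trail_cyc_adj {l : List E} (h : IsClosedTrail src tgt l) (i : ℕ) (hi : i < l.length) :
    tgt (l.get ⟨i, hi⟩) =
      src (l.get ⟨(i+1) % l.length, Nat.mod_lt _ (by omega)⟩) := by
  obtain ⟨hne, _, hc, hw⟩ := h
  by_cases h2 : i + 1 < l.length
  · have : (i+1) % l.length = i + 1 := Nat.mod_eq_of_lt h2
    simp only [this]
    exact isChain_iff_getElem.mp hc i (by omega)
  · have h3 : i + 1 = l.length := by omega
    have h4 : (i+1) % l.length = 0 := by rw [h3]; exact Nat.mod_self _
    simp only [h4]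
    have hgl : l.get ⟨i, hi⟩ = l.getLast hne := by
      rw [getLast_eq_getElem]
      simp only [List.get_eq_getElem]
      congr 1
      omega
    have hh : l.get ⟨0, by omega⟩ = l.head hne := by
      cases l with
      | nil => exact absurd rfl hne
      | cons a t => rfl
    rw [hgl]
    have := hw hne
    rw [this, ← hh]

lemma closed_trail_next {l : List E} (h : IsClosedTrail src tgt l) {e : E} (he : e ∈ l) :
    ∃ f ∈ l, tgt e = src f := by
  obtain ⟨⟨i, hi⟩, rfl⟩ := List.mem_iff_get.mp he
  exact ⟨l.get ⟨(i+1) % l.length, Nat.mod_lt _ (by omega)⟩, List.get_mem _ _,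
    closed_trail_cyc_adj src tgt h i hi⟩

lemma cycle_setoid_minimal (c : Setoid E)
    (hc : ∀ x : E, ∃ l, IsEulerianOn src tgt {y | c.r x y} l ∧ (l.map src).Nodup)
    (s : Setoid E) (hs : ∀ x : E, ∃ l, IsEulerianOn src tgt {y | s.r x y} l)
    (hle : s ≤ c) : s = c := by
  refine le_antisymm hle ?_
  rw [Setoid.le_def]
  intro x y hxy
  obtain ⟨l, ⟨hlT, hlmem⟩, hlnd⟩ := hc x
  obtain ⟨l', hl'T, hl'mem⟩ := hs x
  have step : ∀ e, s.r x e → ∀ f ∈ l, tgt e = src f → s.r x f := by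
    intro e he f hf hadj
    have he' : e ∈ l' := (hl'mem e).mpr he
    obtain ⟨f', hf', hadj'⟩ := closed_trail_next src tgt hl'T he'
    have hsf' : s.r x f' := (hl'mem f').mp hf'
    have hcf' : f' ∈ l := (hlmem f').mpr (Setoid.le_def.mp hle hsf')
    have hsrc : src f = src f' := by rw [← hadj, hadj']
    have : f = f' := List.inj_on_of_nodup_map hlnd hf hcf' hsrc
    rw [this]
    exact hsf'
  have hx_l : x ∈ l := (hlmem x).mpr (c.refl x)
  have hn : 0 < l.length := List.length_pos_iff.mpr hlT.1
  obtain ⟨⟨i0, hi0⟩, hget0⟩ := List.mem_iff_get.mp hx_l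
  have main : ∀ k : ℕ, s.r x (l.get ⟨(i0 + k) % l.length, Nat.mod_lt _ hn⟩) := by
    intro k
    induction k with
    | zero =>
      have h0 : (i0 + 0) % l.length = i0 := by
        simpa using Nat.mod_eq_of_lt hi0
      rw [get_congr l _ hi0 h0, hget0]
    | succ k IH =>
      refine step _ IH _ (List.get_mem _ _) ?_
      have h5 := closed_trail_cyc_adj src tgt hlT ((i0 + k) % l.length) (Nat.mod_lt _ hn)
      have h6 : ((i0 + k) % l.length + 1) % l.length = (i0 + (k+1)) % l.length := by
        rw [Nat.mod_add_mod, Nat.add_assoc]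
      rw [h5]
      exact congrArg src (get_congr l _ _ h6)
  have hy_l : y ∈ l := (hlmem y).mpr hxy
  obtain ⟨⟨j, hj⟩, hgetj⟩ := List.mem_iff_get.mp hy_l
  have hmain := main (j + l.length - i0)
  have h7 : (i0 + (j + l.length - i0)) % l.length = j := by
    have h9 : i0 + (j + l.length - i0) = j + l.length := by omega
    rw [h9, Nat.add_mod_right]
    exact Nat.mod_eq_of_lt hj
  rwa [get_congr l _ hj h7, hgetj] at hmain

lemma isClosedTrail_rotate_one {l : List E} (h : IsClosedTrail src tgt l) :
    IsClosedTrail src tgt (l.rotate 1) := by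
  cases l with
  | nil => exact absurd rfl h.1
  | cons e l2 =>
    obtain ⟨hne, hnd, hc, hw⟩ := h
    have hrot : (e :: l2).rotate 1 = l2 ++ [e] := by
      rw [rotate_cons_succ, rotate_zero]
    rw [hrot]
    refine ⟨by simp, ?_, ?_, ?_⟩
    · exact (perm_append_singleton e l2).nodup_iff.mpr hnd
    · cases l2 with
      | nil => exact isChain_singleton e
      | cons f l3 =>
        refine isChain_append.mpr ⟨(isChain_cons_cons.mp hc).2, isChain_singleton e, ?_⟩
        intro a ha b hb
        simp only [head?_cons, Option.mem_def, Option.some.injEq] at hb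
        subst hb
        rw [getLast?_eq_getLast (l := f :: l3) (cons_ne_nil _ _)] at ha
        simp only [Option.mem_def, Option.some.injEq] at ha
        subst ha
        have := hw hne
        rwa [getLast_cons (cons_ne_nil f l3)] at this
    · intro h'
      cases l2 with
      | nil =>
        simpa using hw hne
      | cons f l3 =>
        have h1 : ((f :: l3) ++ [e]).getLast h' = e := by
          rw [getLast_append_singleton]
        have h2 : ((f :: l3) ++ [e]).head h' = f := rfl
        rw [h1, h2]
        exact (isChain_cons_cons.mp hc).1

lemma isClosedTrail_rotate {l : List E} (h : IsClosedTrail src tgt l) (n : ℕ) :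
    IsClosedTrail src tgt (l.rotate n) := by
  induction n with
  | zero => simpa using h
  | succ n IH =>
    have h2 : l.rotate (n + 1) = (l.rotate n).rotate 1 := by
      rw [rotate_rotate]
    rw [h2]
    exact isClosedTrail_rotate_one src tgt IH

lemma exists_rotate_head {l : List E} (h : IsClosedTrail src tgt l) {x : E} (hx : x ∈ l) :
    ∃ l', IsClosedTrail src tgt l' ∧ (∀ e, e ∈ l' ↔ e ∈ l) ∧
      ∃ h' : l' ≠ [], l'.head h' = x := by
  obtain ⟨l₁, l₂, rfl⟩ := append_of_mem hx
  have hrot : (l₁ ++ x :: l₂).rotate l₁.length = x :: (l₂ ++ l₁) := by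
    rw [rotate_eq_drop_append_take (by simp)]
    rw [drop_left, take_left]
    simp
  refine ⟨(l₁ ++ x :: l₂).rotate l₁.length, isClosedTrail_rotate src tgt h _,
    fun e => mem_rotate, ?_⟩
  rw [hrot]
  exact ⟨cons_ne_nil _ _, rfl⟩

lemma exists_prefix_to (p : V) : ∀ (l : List E), l.Chain' (fun e f => tgt e = src f) →
    (∃ g ∈ l, tgt g = p) → ∀ hne : l ≠ [],
    ∃ (Q : List E) (hQ : Q ≠ []), Q <+: l ∧ Q.head hQ = l.head hne ∧ tgt (Q.getLast hQ) = p
  | [] => by intro _ _ hne; exact absurd rfl hne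
  | g :: l2 => by
    intro hc hg hne
    by_cases hgp : tgt g = p
    · exact ⟨[g], by simp, ⟨l2, rfl⟩, rfl, by simpa using hgp⟩
    · have hex : ∃ g' ∈ l2, tgt g' = p := by
        obtain ⟨g', hg', hgp'⟩ := hg
        rcases mem_cons.mp hg' with rfl | h2
        · exact absurd hgp' hgp
        · exact ⟨g', h2, hgp'⟩
      have hl2 : l2 ≠ [] := by rintro rfl; simp at hex
      obtain ⟨Q2, hQ2ne, hQ2pre, hQ2head, hQ2last⟩ := exists_prefix_to p l2 hc.tail hex hl2
      obtain ⟨tl, htl⟩ := hQ2pre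
      refine ⟨g :: Q2, cons_ne_nil _ _, ⟨tl, by rw [cons_append, htl]⟩, rfl, ?_⟩
      rw [getLast_cons hQ2ne]
      exact hQ2last

lemma dropWhile_head_not (p : E → Bool) : ∀ (l : List E) (a : E) (t : List E),
    l.dropWhile p = a :: t → ¬ p a
  | [], a, t => by simp
  | b :: l2, a, t => by
    intro h
    rw [dropWhile_cons] at h
    split_ifs at h with hb
    · exact dropWhile_head_not p l2 a t h
    · injection h with h1 h2
      subst h1
      exact hb

lemma balanced_of_closed_under (m : Setoid E)
    (hm : ∀ z : E, ∃ M : Multiset E, M.Nodup ∧ (∀ a, a ∈ M ↔ m.r z a) ∧ EBalanced src tgt M) :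
    ∀ T : Finset E, (∀ y ∈ T, ∀ z : E, m.r y z → z ∈ T) → EBalanced src tgt T.val := by
  classical
  intro T
  induction T using Finset.strongInduction with
  | _ T IH =>
    intro hT
    by_cases hTe : T = ∅
    · subst hTe; intro v; simp
    · obtain ⟨y, hy⟩ := Finset.nonempty_iff_ne_empty.mpr hTe
      obtain ⟨M, hMnd, hMmem, hMbal⟩ := hm y
      set C : Finset E := Finset.univ.filter (m.r y ·) with hC
      have hCval : C.val = M := by
        rw [Multiset.Nodup.ext C.nodup hMnd]
        intro a
        simp only [hC, Finset.mem_val, Finset.mem_filter, Finset.mem_univ, true_and]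
        exact (hMmem a).symm
      have hCT : C ⊆ T := by
        intro z hz
        simp only [hC, Finset.mem_filter, Finset.mem_univ, true_and] at hz
        exact hT y hy z hz
      have hCne : C.Nonempty := by
        refine ⟨y, ?_⟩
        simp only [hC, Finset.mem_filter, Finset.mem_univ, true_and]
        exact m.refl y
      have hlt : T \ C ⊂ T := Finset.sdiff_ssubset hCT hCne
      have hT' : ∀ y' ∈ T \ C, ∀ z, m.r y' z → z ∈ T \ C := by
        intro y' hy' z hz
        obtain ⟨hy'T, hy'C⟩ := Finset.mem_sdiff.mp hy'
        refine Finset.mem_sdiff.mpr ⟨hT y' hy'T z hz, ?_⟩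
        intro hzC
        simp only [hC, Finset.mem_filter, Finset.mem_univ, true_and] at hzC hy'C
        exact hy'C (m.trans hzC (m.symm hz))
      have hbal' := IH _ hlt hT'
      have hval : (T \ C).val + C.val = T.val := by
        rw [Finset.sdiff_val]
        exact tsub_add_cancel_of_le (Finset.val_le_iff.mpr hCT)
      intro v
      have h1 := (EBalanced.add src tgt hbal' (hCval ▸ hMbal)) v
      rwa [hval] at h1

lemma bridging (B : Set E) (lB : List E) (hlB : IsEulerianOn src tgt B lB)
    (m : Setoid E) (hmB : ∀ y z : E, m.r y z → (y ∈ B ↔ z ∈ B))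
    (hmbal : ∀ z : E, ∃ M : Multiset E, M.Nodup ∧ (∀ a, a ∈ M ↔ m.r z a) ∧ EBalanced src tgt M)
    (huniv : EBalanced src tgt (Finset.univ : Finset E).val)
    (hmin : ∀ c : Setoid E,
      (∀ z : E, ∃ l, IsEulerianOn src tgt {y | c.r z y} l ∧ (l.map src).Nodup) → c = m)
    (e f : E) (r : List E) (he : e ∈ B) (hf : f ∈ B) (hrnd : r.Nodup)
    (hrB : ∀ g ∈ r, g ∉ B)
    (hchain : List.Chain' (fun a b => tgt a = src b) (e :: (r ++ [f]))) :
    tgt e = src f := by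
  classical
  by_cases hr : r = []
  · subst hr
    exact (isChain_cons_cons.mp hchain).1
  · by_contra hpq
    have hcr' : Chain' (fun a b => tgt a = src b) (r ++ [f]) := (isChain_cons.mp hchain).2
    have hcr : Chain' (fun a b => tgt a = src b) r := hcr'.prefix ⟨[f], rfl⟩
    have hc1 : tgt e = src (r.head hr) := by
      have h1 := (isChain_cons.mp hchain).1
      apply h1
      cases r with
      | nil => exact absurd rfl hr
      | cons a r2 => rfl
    have hc2 : tgt (r.getLast hr) = src f := by
      have h3 := (isChain_append.mp hcr').2.2
      apply h3 (r.getLast hr) _ f rfl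
      rw [getLast?_eq_getLast hr]
      rfl
    have hfB : f ∈ lB := (hlB.2 f).mpr hf
    obtain ⟨lB', hlB'T, hlB'mem, hlB'ne, hlB'head⟩ := exists_rotate_head src tgt hlB.1 hfB
    have heB' : e ∈ lB' := (hlB'mem e).mpr ((hlB.2 e).mpr he)
    obtain ⟨Q, hQne, hQpre, hQhead, hQlast⟩ :=
      exists_prefix_to src tgt (tgt e) lB' hlB'T.2.2.1 ⟨e, heB', rfl⟩ hlB'ne
    have hQB : ∀ g ∈ Q, g ∈ B := fun g hg =>
      (hlB.2 g).mp ((hlB'mem g).mp (hQpre.sublist.subset hg))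
    have hQnd : Q.Nodup := hlB'T.2.1.sublist hQpre.sublist
    have hQchain : Chain' (fun a b => tgt a = src b) Q := hlB'T.2.2.1.prefix hQpre
    have hQheadsrc : src (Q.head hQne) = src f := by rw [hQhead, hlB'head]
    set Z := r ++ Q with hZdef
    have hZne : Z ≠ [] := by simp [hZdef, hr]
    have hdisj : List.Disjoint r Q := fun a har haq => hrB a har (hQB a haq)
    have hZnd : Z.Nodup := hrnd.append hQnd hdisj
    have hZchain : Chain' (fun a b => tgt a = src b) Z := by
      refine isChain_append.mpr ⟨hcr, hQchain, ?_⟩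
      intro a ha b hb
      rw [getLast?_eq_getLast hr] at ha
      simp only [Option.mem_def, Option.some.injEq] at ha
      subst ha
      have hbQ : b = Q.head hQne := by
        cases Q with
        | nil => exact absurd rfl hQne
        | cons q Q2 =>
          simp only [head?_cons, Option.mem_def, Option.some.injEq] at hb
          subst hb; rfl
      subst hbQ
      rw [hc2, ← hQheadsrc]
    have hZwrap : ∀ h : Z ≠ [], tgt (Z.getLast h) = src (Z.head h) := by
      intro h
      have h1 : Z.getLast h = Q.getLast hQne := getLast_append_of_right_ne_nil r Q hQne
      have h2 : Z.head h = r.head hr := by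
        cases r with
        | nil => exact absurd rfl hr
        | cons a r2 => rfl
      rw [h1, h2, hQlast, hc1]
    have hZT : IsClosedTrail src tgt Z := ⟨hZne, hZnd, hZchain, hZwrap⟩
    set u : Setoid E := ⟨fun a b => (a ∈ Z) = (b ∈ Z), ⟨fun _ => rfl, Eq.symm, Eq.trans⟩⟩
      with hudef
    have hubal : ∀ z : E, ∃ M : Multiset E, M.Nodup ∧ (∀ a, a ∈ M ↔ u.r z a) ∧
        EBalanced src tgt M := by
      intro z
      by_cases hz : z ∈ Z
      · refine ⟨↑Z, Multiset.coe_nodup.mpr hZnd, ?_, balanced_coe src tgt hZT⟩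
        intro a
        show a ∈ Z ↔ (z ∈ Z) = (a ∈ Z)
        constructor
        · intro ha
          simp [hz, ha]
        · intro hza
          rw [← hza]; exact hz
      · refine ⟨(Finset.univ : Finset E).val - ↑Z,
          Multiset.nodup_of_le (Multiset.sub_le_self _ _) Finset.univ.nodup, ?_,
          EBalanced.sub src tgt huniv (balanced_coe src tgt hZT) ?_⟩
        · intro a
          have hcnt : Multiset.count a ((Finset.univ : Finset E).val - ↑Z)
              = 1 - Multiset.count a (↑Z : Multiset E) := by
            rw [Multiset.count_sub]
            congr 1
            exact Multiset.count_eq_one_of_mem Finset.univ.nodup (Finset.mem_univ a)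
          constructor
          · intro ha
            have := Multiset.count_pos.mpr ha
            rw [hcnt] at this
            have haZ : a ∉ Z := by
              intro haZ
              have h2 : 0 < Multiset.count a (↑Z : Multiset E) :=
                Multiset.count_pos.mpr (Multiset.mem_coe.mpr haZ)
              omega
            show (z ∈ Z) = (a ∈ Z)
            simp [hz, haZ]
          · intro hza
            have haZ : a ∉ Z := by
              have : (z ∈ Z) = (a ∈ Z) := hza
              rw [← this]; exact hz
            rw [← Multiset.count_pos, hcnt]
            have : Multiset.count a (↑Z : Multiset E) = 0 := by
              rw [Multiset.coe_count]
              exact count_eq_zero.mpr haZ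
            omega
        · rw [Multiset.le_iff_count]
          intro a
          by_cases haZ : a ∈ Z
          · have h1 : Multiset.count a (↑Z : Multiset E) = 1 := by
              rw [Multiset.coe_count]
              exact count_eq_one_of_mem hZnd haZ
            have h2 : Multiset.count a (Finset.univ : Finset E).val = 1 :=
              Multiset.count_eq_one_of_mem Finset.univ.nodup (Finset.mem_univ a)
            omega
          · have h1 : Multiset.count a (↑Z : Multiset E) = 0 := by
              rw [Multiset.coe_count]; exact count_eq_zero.mpr haZ
            omega
    obtain ⟨c, hcle, hccyc⟩ := exists_cycle_refinement src tgt u hubal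
    have hcm : c = m := hmin c hccyc
    have hmZ : ∀ y z : E, m.r y z → (y ∈ Z ↔ z ∈ Z) := by
      intro y z h
      have h' : c.r y z := by rw [hcm]; exact h
      have h2 := Setoid.le_def.mp hcle h'
      exact iff_of_eq h2
    have hclosed : ∀ y ∈ r.toFinset, ∀ z, m.r y z → z ∈ r.toFinset := by
      intro y hy z hz
      have hyr : y ∈ r := mem_toFinset.mp hy
      have hyZ : y ∈ Z := mem_append.mpr (Or.inl hyr)
      have hzZ : z ∈ Z := (hmZ y z hz).mp hyZ
      have hzB : z ∉ B := fun hzB' => hrB y hyr ((hmB y z hz).mpr hzB')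
      rcases mem_append.mp hzZ with h | h
      · exact mem_toFinset.mpr h
      · exact absurd (hQB z h) hzB
    have hbalr := balanced_of_closed_under src tgt m hmbal r.toFinset hclosed
    have hrval : r.toFinset.val = (↑r : Multiset E) :=
      Multiset.dedup_eq_self.mpr (Multiset.coe_nodup.mpr hrnd)
    rw [hrval] at hbalr
    have hcount := count_src_tgt src tgt r hcr hr (src f)
    rw [if_pos hc2, if_neg (fun h => hpq (hc1.trans h))] at hcount
    have hb := hbalr (src f)
    simp only [Multiset.map_coe, Multiset.coe_count] at hb
    omega

lemma head_eq_of_eq {l1 l2 : List E} (h : l1 = l2) (h1 : l1 ≠ []) :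
    l1.head h1 = l2.head (h ▸ h1) := by subst h; rfl

lemma chain'_filter (pb : E → Bool) (B : Set E) (hpb : ∀ g, pb g = true ↔ g ∈ B)
    (hbr : ∀ (e f : E) (r : List E), e ∈ B → f ∈ B → r.Nodup → (∀ g ∈ r, g ∉ B) →
      List.Chain' (fun a b => tgt a = src b) (e :: (r ++ [f])) → tgt e = src f) :
    ∀ l : List E, l.Chain' (fun a b => tgt a = src b) →
      (∀ r, r <:+: l → (∀ g ∈ r, g ∉ B) → r.Nodup) →
      (l.filter pb).Chain' (fun a b => tgt a = src b) := by
  intro l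
  induction l with
  | nil => intro _ _; exact List.IsChain.nil
  | cons e l2 IH =>
    intro hc hnd
    have hc2 : Chain' (fun a b => tgt a = src b) l2 := hc.tail
    have hnd2 : ∀ r, r <:+: l2 → (∀ g ∈ r, g ∉ B) → r.Nodup := by
      intro r hr h
      exact hnd r (hr.trans ⟨[e], [], by simp⟩) h
    have IH2 := IH hc2 hnd2
    by_cases heB : pb e
    · rw [filter_cons_of_pos heB]
      refine isChain_cons.mpr ⟨?_, IH2⟩
      intro f hf
      set tw := l2.takeWhile (fun g => !(pb g)) with htw
      set dw := l2.dropWhile (fun g => !(pb g)) with hdw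
      have htd : tw ++ dw = l2 := takeWhile_append_dropWhile
      have htwB : ∀ g ∈ tw, g ∉ B := by
        intro g hg hgB
        have h2 := mem_takeWhile_imp hg
        simp [(hpb g).mpr hgB] at h2
      have hfil : l2.filter pb = dw.filter pb := by
        conv_lhs => rw [← htd]
        rw [filter_append]
        have : tw.filter pb = [] := by
          rw [filter_eq_nil_iff]
          intro g hg
          intro hgb
          exact htwB g hg ((hpb g).mp hgb)
        rw [this, nil_append]
      cases hdwe : dw with
      | nil =>
        rw [hfil, hdwe] at hf
        simp at hf
      | cons f' d2 =>
        have hdwe' : l2.dropWhile (fun g => !(pb g)) = f' :: d2 := by rw [← hdw]; exact hdwe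
        have h3 := dropWhile_head_not (fun g => !(pb g)) l2 f' d2 hdwe'
        have hf'b : pb f' = true := by simpa using h3
        have hf'B : f' ∈ B := (hpb f').mp hf'b
        have hff' : f = f' := by
          rw [hfil, hdwe, filter_cons_of_pos hf'b] at hf
          simp only [head?_cons, Option.mem_def, Option.some.injEq] at hf
          exact hf.symm
        subst hff'
        have htd2 : tw ++ f :: d2 = l2 := by rw [← htd, hdwe]
        have hpre : (e :: (tw ++ [f])) <+: (e :: l2) := by
          refine ⟨d2, ?_⟩
          rw [cons_append, append_assoc, singleton_append, htd2]
        have htwnd : tw.Nodup := by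
          refine hnd tw ⟨[e], dw, ?_⟩ htwB
          simp [htd]
        exact hbr e f tw ((hpb e).mp heB) hf'B htwnd htwB (hc.prefix hpre)
    · rw [filter_cons_of_neg heB]
      exact IH2

end EulerAux

attribute [local instance] Classical.propDecidable

/-- If the poset `T(D)` of partitions of the edge set of an Eulerian digraph `D` into
connected Eulerian blocks has a unique minimal element (i.e. `D` has a unique partition
into directed cycles), then `T(D)` is closed under the meet of the partition lattice
(hence is a lattice). -/
theorem eulerianPartition_inf_closed {V E : Type*} [Fintype V] [Fintype E]
    (src tgt : E → V) (hD : IsEulerianSet src tgt Set.univ)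
    (huniq : ∃! m : Setoid E, EulerianPartition src tgt m ∧
        ∀ s : Setoid E, EulerianPartition src tgt s → s ≤ m → s = m)
    (s t : Setoid E) (hs : EulerianPartition src tgt s)
    (ht : EulerianPartition src tgt t) :
    EulerianPartition src tgt (s ⊓ t) := by
  classical
  obtain ⟨m, ⟨hmEP, hmmin⟩, hmU⟩ := huniq
  have clsbal : ∀ (u : Setoid E), EulerianPartition src tgt u →
      ∀ z : E, ∃ M : Multiset E, M.Nodup ∧ (∀ a, a ∈ M ↔ u.r z a) ∧ EBalanced src tgt M := by
    intro u hu z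
    obtain ⟨l, hT, hmem⟩ := hu z
    refine ⟨↑l, Multiset.coe_nodup.mpr hT.2.1, ?_, balanced_coe src tgt hT⟩
    intro a
    rw [Multiset.mem_coe]
    exact hmem a
  have hmin : ∀ c : Setoid E,
      (∀ z, ∃ l, IsEulerianOn src tgt {y | c.r z y} l ∧ (l.map src).Nodup) → c = m := by
    intro c hccyc
    refine hmU c ⟨fun z => ⟨(hccyc z).choose, (hccyc z).choose_spec.1⟩, ?_⟩
    intro s' hs' hle'
    exact cycle_setoid_minimal src tgt c hccyc s' hs' hle'
  have hmle : ∀ (u : Setoid E), EulerianPartition src tgt u → m ≤ u := by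
    intro u hu
    obtain ⟨c, hcle, hccyc⟩ := exists_cycle_refinement src tgt u (clsbal u hu)
    rw [← hmin c hccyc]
    exact hcle
  obtain ⟨lU, hlUT, hlUmem⟩ := hD
  have huniv : EBalanced src tgt (Finset.univ : Finset E).val := by
    have hval : (Finset.univ : Finset E).val = (↑lU : Multiset E) := by
      rw [Multiset.Nodup.ext Finset.univ.nodup (Multiset.coe_nodup.mpr hlUT.2.1)]
      intro a
      simp only [Finset.mem_val, Finset.mem_univ, Multiset.mem_coe, true_iff]
      exact (hlUmem a).mpr trivial
    rw [hval]
    exact balanced_coe src tgt hlUT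
  intro x
  set B : Set E := {y | t.r x y} with hB
  obtain ⟨lB, hlBT, hlBmem⟩ := ht x
  have hmB : ∀ y z : E, m.r y z → (y ∈ B ↔ z ∈ B) := by
    intro y z h
    have h2 : t.r y z := Setoid.le_def.mp (hmle t ht) h
    constructor
    · intro hy; exact t.trans hy h2
    · intro hz; exact t.trans hz (t.symm h2)
  have hbr := bridging src tgt B lB ⟨hlBT, hlBmem⟩ m hmB (clsbal m hmEP) huniv hmin
  obtain ⟨lA, hlAT, hlAmem⟩ := hs x
  have hxA : x ∈ lA := (hlAmem x).mpr (s.refl x)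
  obtain ⟨l', hl'T, hl'mem, hl'ne, hl'head⟩ := exists_rotate_head src tgt hlAT hxA
  have hxB : x ∈ B := t.refl x
  have hchainp : List.Chain' (fun a b => tgt a = src b) (l' ++ [x]) := by
    refine List.isChain_append.mpr ⟨hl'T.2.2.1, List.isChain_singleton x, ?_⟩
    intro a ha b hb
    rw [List.getLast?_eq_getLast hl'ne] at ha
    simp only [List.head?_cons, Option.mem_def, Option.some.injEq] at ha hb
    subst ha; subst hb
    rw [hl'T.2.2.2 hl'ne, hl'head]
  have hinf : ∀ r, r <:+: (l' ++ [x]) → (∀ g ∈ r, g ∉ B) → r.Nodup := by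
    intro r hr hrB
    have hsub : r <+ (l' ++ [x]) := hr.sublist
    obtain ⟨r1, r2, hre, h1, h2⟩ := List.sublist_append_iff.mp hsub
    cases r2 with
    | nil =>
      rw [List.append_nil] at hre
      subst hre
      exact hl'T.2.1.sublist h1
    | cons a r3 =>
      exfalso
      have ha : a ∈ ([x] : List E) := h2.subset (List.mem_cons_self (a := a) (l := r3))
      simp only [List.mem_singleton] at ha
      subst ha
      exact hrB a (by rw [hre]; exact List.mem_append.mpr (Or.inr (List.mem_cons_self (a := a) (l := r3)))) hxB
  set pb : E → Bool := fun e => decide (e ∈ B) with hpbdef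
  have hpbiff : ∀ g, pb g = true ↔ g ∈ B := fun g => by simp [hpbdef]
  have hwchain := chain'_filter src tgt pb B hpbiff hbr (l' ++ [x]) hchainp hinf
  have hfe : (l' ++ [x]).filter pb = (l'.filter pb) ++ [x] := by
    rw [List.filter_append]
    simp [hpbdef, hxB]
  rw [hfe] at hwchain
  set w := l'.filter pb with hw
  have hxw : x ∈ w := by
    rw [hw, List.mem_filter]
    exact ⟨(hl'mem x).mpr hxA, by simp [hpbdef, hxB]⟩
  have hwne : w ≠ [] := List.ne_nil_of_mem hxw
  have hwnd : w.Nodup := hl'T.2.1.sublist (List.filter_sublist)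
  have hwc : List.Chain' (fun a b => tgt a = src b) w := hwchain.prefix ⟨[x], rfl⟩
  have hlink : tgt (w.getLast hwne) = src x := by
    have h3 := (List.isChain_append.mp hwchain).2.2
    apply h3 _ _ x rfl
    rw [List.getLast?_eq_getLast hwne]
    rfl
  have hheadw : w.head hwne = x := by
    have h4 : w = x :: (l'.tail.filter pb) := by
      rw [hw]
      conv_lhs => rw [show l' = x :: l'.tail from by
        rw [← hl'head]; exact (List.cons_head_tail hl'ne).symm]
      rw [List.filter_cons_of_pos (by simp [hpbdef, hxB])]
    rw [head_eq_of_eq h4 hwne]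
    rfl
  refine ⟨w, ⟨hwne, hwnd, hwc, ?_⟩, ?_⟩
  · intro h
    exact hlink.trans (congrArg src hheadw.symm)
  · intro e
    rw [hw, List.mem_filter]
    constructor
    · rintro ⟨hel', heB⟩
      have h5 : s.r x e := (hlAmem e).mp ((hl'mem e).mp hel')
      have h6 : t.r x e := by simpa [hpbdef, hB] using heB
      show (s ⊓ t).r x e
      exact Setoid.inf_iff_and.mpr ⟨h5, h6⟩
    · intro he
      have h7 : s.r x e ∧ t.r x e := Setoid.inf_iff_and.mp he
      exact ⟨(hl'mem e).mpr ((hlAmem e).mpr h7.1), by simp [hpbdef, hB]; exact h7.2⟩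
end

section
/- Let D be a connected Eulerian digraph that is not a single directed cycle. Let f_k(D) be the number of partitions of Eulerian circuits of D into k circuits, i.e., the number of sets {[w₁], …, [w_k]} of circuits of D with pairwise disjoint edge sets covering E(D) such that some insertion composition of w₁, …, w_k is an Eulerian circuit of D. Then ∑_{k ≥ 1} (−1)^k f_k(D) = 0. -/
/-- `f_k(D)`: the number of partitions of Eulerian circuits of `D` into `k` circuits,
computed as the sum over partitions of `E(D)` into `k` connected Eulerian blocks of the
product of the numbers of Eulerian circuits of the blocks. -/
noncomputable def fk {V E : Type*} [Fintype E] (src tgt : E → V) (k : ℕ) : ℕ :=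
  ∑ᶠ a ∈ {a : Setoid E | EulerianPartition src tgt a ∧ Nat.card (Quotient a) = k},
    ∏ᶠ q : Quotient a, numEC src tgt {e | Quotient.mk a e = q}

namespace MartinAux

open Equiv List Function

variable {V E : Type*}

def Compat (src tgt : E → V) (σ : Equiv.Perm E) : Prop := ∀ e, src (σ e) = tgt e

def PS (σ : Equiv.Perm E) : Setoid E :=
  ⟨σ.SameCycle, ⟨fun _ => Equiv.Perm.SameCycle.refl _ _, fun h => h.symm, fun h h' => h.trans h'⟩⟩

lemma PS_r (σ : Equiv.Perm E) (x y : E) : (PS σ).r x y ↔ σ.SameCycle x y := Iff.rfl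

lemma next_get' {α : Type*} [DecidableEq α] (l : List α) (h : l.Nodup) (i : Fin l.length) :
    l.next (l.get i) (List.get_mem _ _) =
      l.get ⟨(i + 1) % l.length, Nat.mod_lt _ (i.1.zero_le.trans_lt i.2)⟩ :=
  List.next_getElem l h i i.2

lemma chain'_iff_get' {α : Type*} {R : α → α → Prop} {l : List α} :
    List.Chain' R l ↔ ∀ (i : ℕ) (h : i < l.length - 1),
      R (l.get ⟨i, by omega⟩) (l.get ⟨i + 1, by omega⟩) := by
  refine List.isChain_iff_getElem.trans ?_
  exact ⟨fun h i hi => h i (by omega), fun h i hi => h i (by omega)⟩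

/-- key fact about closed trails: `tgt` of an edge is `src` of the cyclically next edge. -/
lemma tgt_eq_src_next [DecidableEq E] {src tgt : E → V} {l : List E}
    (hcl : IsClosedTrail src tgt l) {e : E} (he : e ∈ l) : tgt e = src (l.next e he) := by
  obtain ⟨hne, hnd, hch, hlast⟩ := hcl
  obtain ⟨i, rfl⟩ := List.mem_iff_get.mp he
  rw [next_get' l hnd i]
  rcases lt_or_ge ((i : ℕ) + 1) l.length with h | h
  · have := chain'_iff_get'.mp hch i (by omega)
    convert this using 3 <;> exact Fin.ext (by simp [Nat.mod_eq_of_lt h])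
  · have hi : (i : ℕ) = l.length - 1 := by omega
    have h0 : ((i : ℕ) + 1) % l.length = 0 := by
      have : (i : ℕ) + 1 = l.length := by omega
      simp [this]
    have h1 : l.get i = l.getLast hne := by
      rw [List.getLast_eq_getElem]
      simp [hi]
    have h2 : l.get ⟨((i : ℕ) + 1) % l.length, by
        exact Nat.mod_lt _ (by omega)⟩ = l.head hne := by
      rw [List.head_eq_getElem_zero hne]
      simp [h0]
    rw [h1, h2]
    exact hlast hne


section OrbitList

variable [Fintype E]

lemma mem_periodicPts (σ : Equiv.Perm E) (x : E) : x ∈ Function.periodicPts ⇑σ := by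
  refine ⟨orderOf σ, orderOf_pos σ, ?_⟩
  show (⇑σ)^[orderOf σ] x = x
  rw [← Equiv.Perm.coe_pow, pow_orderOf_eq_one]
  rfl

lemma minPeriod_pos (σ : Equiv.Perm E) (x : E) : 0 < Function.minimalPeriod ⇑σ x :=
  Function.minimalPeriod_pos_of_mem_periodicPts (mem_periodicPts σ x)

/-- the orbit of `x` under `σ`, listed in order. -/
noncomputable def orbitList (σ : Equiv.Perm E) (x : E) : List E :=
  (List.range (Function.minimalPeriod ⇑σ x)).map fun i => (σ ^ i) x

lemma orbitList_length (σ : Equiv.Perm E) (x : E) :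
    (orbitList σ x).length = Function.minimalPeriod ⇑σ x := by simp [orbitList]

lemma orbitList_ne_nil (σ : Equiv.Perm E) (x : E) : orbitList σ x ≠ [] := by
  have h1 := orbitList_length σ x
  have h2 := minPeriod_pos σ x
  intro h
  rw [h] at h1
  simp only [List.length_nil] at h1
  omega

lemma orbitList_getElem (σ : Equiv.Perm E) (x : E) (i : ℕ) (h : i < (orbitList σ x).length) :
    (orbitList σ x)[i] = (σ ^ i) x := by
  simp [orbitList]

lemma orbitList_nodup (σ : Equiv.Perm E) (x : E) : (orbitList σ x).Nodup := by
  refine List.Nodup.map_on ?_ List.nodup_range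
  intro i hi j hj hij
  rw [List.mem_range] at hi hj
  have inj := Function.iterate_injOn_Iio_minimalPeriod (f := ⇑σ) (x := x)
  have h1 : (fun n => (⇑σ)^[n] x) i = (fun n => (⇑σ)^[n] x) j := by
    simp only [Equiv.Perm.iterate_eq_pow]
    exact hij
  exact inj (Set.mem_Iio.mpr hi) (Set.mem_Iio.mpr hj) h1

lemma mem_orbitList {σ : Equiv.Perm E} {x e : E} :
    e ∈ orbitList σ x ↔ σ.SameCycle x e := by
  constructor
  · rintro h
    rw [orbitList, List.mem_map] at h
    obtain ⟨i, _, rfl⟩ := h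
    exact ⟨(i : ℤ), by simp [zpow_natCast]⟩
  · intro h
    obtain ⟨i, hlt, rfl⟩ := h.exists_pow_eq'
    rw [orbitList, List.mem_map]
    refine ⟨i % Function.minimalPeriod ⇑σ x,
      List.mem_range.mpr (Nat.mod_lt _ (minPeriod_pos σ x)), ?_⟩
    show (σ ^ (i % Function.minimalPeriod ⇑σ x)) x = (σ ^ i) x
    have h3 := Function.iterate_mod_minimalPeriod_eq (f := ⇑σ) (x := x) (n := i)
    simp only [Equiv.Perm.iterate_eq_pow] at h3
    exact h3

lemma next_orbitList [DecidableEq E] (σ : Equiv.Perm E) (x : E) (e : E)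
    (he : e ∈ orbitList σ x) : (orbitList σ x).next e he = σ e := by
  obtain ⟨i, hi, rfl⟩ := List.mem_iff_getElem.mp he
  have hnd := orbitList_nodup σ x
  have h2 := next_get' (orbitList σ x) hnd ⟨i, hi⟩
  simp only [List.get_eq_getElem] at h2
  rw [h2]
  have h1 : (i + 1) % (orbitList σ x).length < (orbitList σ x).length :=
    Nat.mod_lt _ (by omega)
  rw [orbitList_getElem σ x _ h1, orbitList_getElem σ x _ hi]
  rw [orbitList_length]
  have h3 := Function.iterate_mod_minimalPeriod_eq (f := ⇑σ) (x := x) (n := i + 1)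
  simp only [Equiv.Perm.iterate_eq_pow] at h3
  rw [h3, pow_succ', Equiv.Perm.mul_apply]

lemma isEulerianOn_orbitList {src tgt : E → V} {σ : Equiv.Perm E}
    (hσ : Compat src tgt σ) (x : E) :
    IsEulerianOn src tgt {y | σ.SameCycle x y} (orbitList σ x) := by
  refine ⟨⟨orbitList_ne_nil σ x, orbitList_nodup σ x, ?_, ?_⟩, fun e => mem_orbitList⟩
  · rw [chain'_iff_get']
    intro i hi
    simp only [List.get_eq_getElem]
    rw [orbitList_getElem σ x _ (by omega), orbitList_getElem σ x _ (by omega),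
      pow_succ', Equiv.Perm.mul_apply]
    exact (hσ _).symm
  · intro h
    have hlen := orbitList_length σ x
    have hpos := minPeriod_pos σ x
    rw [List.getLast_eq_getElem, List.head_eq_getElem_zero h]
    rw [orbitList_getElem σ x _ (by omega), orbitList_getElem σ x _ (by omega)]
    have h2 : σ ((σ ^ ((orbitList σ x).length - 1)) x) = (σ ^ (0:ℕ)) x := by
      rw [← Equiv.Perm.mul_apply, ← pow_succ']
      rw [hlen, Nat.sub_add_cancel hpos]
      have h3 := Function.iterate_minimalPeriod (f := ⇑σ) (x := x)
      simp only [Equiv.Perm.iterate_eq_pow] at h3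
      simp [h3]
    rw [← h2]
    exact (hσ _).symm

end OrbitList


section Reconstruct

variable [Fintype E] [DecidableEq E]

lemma sigma_pow_getElem {σ : Equiv.Perm E} {l : List E} (hnd : l.Nodup)
    (hnext : ∀ e (he : e ∈ l), σ e = l.next e he) (i j : ℕ) (hi : i < l.length) :
    (σ ^ j) l[i] = l[(i + j) % l.length]'(Nat.mod_lt _ (by omega)) := by
  induction j with
  | zero => simp [Nat.mod_eq_of_lt hi]
  | succ j ih =>
    rw [pow_succ', Equiv.Perm.mul_apply, ih]
    have hmem : l[(i + j) % l.length]'(Nat.mod_lt _ (by omega)) ∈ l := List.getElem_mem _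
    rw [hnext _ hmem]
    have h2 := next_get' l hnd ⟨(i + j) % l.length, Nat.mod_lt _ (by omega)⟩
    simp only [List.get_eq_getElem] at h2
    rw [h2]
    congr 1
    rw [Nat.mod_add_mod, Nat.add_assoc]

lemma minimalPeriod_eq_length {σ : Equiv.Perm E} {l : List E} (hnd : l.Nodup) (hne : l ≠ [])
    (hnext : ∀ e (he : e ∈ l), σ e = l.next e he) {i : ℕ} (hi : i < l.length) :
    Function.minimalPeriod ⇑σ l[i] = l.length := by
  have hlpos : 0 < l.length := List.length_pos_iff.mpr hne
  have hper : Function.IsPeriodicPt ⇑σ l.length l[i] := by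
    show (⇑σ)^[l.length] l[i] = l[i]
    rw [Equiv.Perm.iterate_eq_pow, sigma_pow_getElem hnd hnext i l.length hi]
    congr 1
    rw [Nat.add_mod_right]
    exact Nat.mod_eq_of_lt hi
  have hle : Function.minimalPeriod ⇑σ l[i] ≤ l.length :=
    hper.minimalPeriod_le hlpos
  rcases eq_or_lt_of_le hle with h | h
  · exact h
  · exfalso
    set T := Function.minimalPeriod ⇑σ l[i] with hT
    have hTpos : 0 < T := Function.IsPeriodicPt.minimalPeriod_pos hlpos hper
    have hfix : (σ ^ T) l[i] = l[i] := by
      have h3 := Function.iterate_minimalPeriod (f := ⇑σ) (x := l[i])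
      simp only [Equiv.Perm.iterate_eq_pow] at h3
      exact h3
    rw [sigma_pow_getElem hnd hnext i T hi] at hfix
    have := (hnd.getElem_inj_iff).mp hfix
    rcases lt_or_ge (i + T) l.length with hc | hc
    · rw [Nat.mod_eq_of_lt hc] at this; omega
    · rw [Nat.mod_eq_sub_mod hc, Nat.mod_eq_of_lt (by omega)] at this
      omega

lemma orbitList_eq_rotate {σ : Equiv.Perm E} {l : List E} (hnd : l.Nodup) (hne : l ≠ [])
    (hnext : ∀ e (he : e ∈ l), σ e = l.next e he) {x : E} (hx : x ∈ l) :
    ∃ m, orbitList σ x = l.rotate m := by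
  obtain ⟨i, hi, rfl⟩ := List.mem_iff_getElem.mp hx
  refine ⟨i, List.ext_getElem ?_ ?_⟩
  · rw [orbitList_length, List.length_rotate, minimalPeriod_eq_length hnd hne hnext hi]
  · intro j hj hj'
    rw [orbitList_getElem σ _ j hj, List.getElem_rotate,
      sigma_pow_getElem hnd hnext i j hi]
    congr 1
    rw [Nat.add_comm]

end Reconstruct

section Partition

variable [Fintype E]

lemma eulerianPartition_PS {src tgt : E → V} {σ : Equiv.Perm E} (hσ : Compat src tgt σ) :
    EulerianPartition src tgt (PS σ) :=
  fun x => ⟨orbitList σ x, isEulerianOn_orbitList hσ x⟩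

end Partition

section KeyA

variable [Fintype E] [DecidableEq E] (src tgt : E → V) (a : Setoid E)

/-- rotation relation on Eulerian lists of the block of `q`. -/
abbrev RotRel (q : Quotient a) :
    {l : List E // IsEulerianOn src tgt {e | Quotient.mk a e = q} l} →
    {l : List E // IsEulerianOn src tgt {e | Quotient.mk a e = q} l} → Prop :=
  fun l₁ l₂ => ∃ m, (l₂ : List E) = (l₁ : List E).rotate m

lemma isEulerianOn_orbit_block {σ : Equiv.Perm E} (hc : Compat src tgt σ) (hPS : PS σ = a)
    (q : Quotient a) : IsEulerianOn src tgt {e | Quotient.mk a e = q} (orbitList σ q.out) := by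
  have h := isEulerianOn_orbitList hc q.out
  have hset : {y | σ.SameCycle q.out y} = {e | Quotient.mk a e = q} := by
    ext e
    have hr : (PS σ).r = a.r := by rw [hPS]
    have h1 : σ.SameCycle q.out e ↔ a.r q.out e := iff_of_eq (congrFun (congrFun hr q.out) e)
    simp only [Set.mem_setOf_eq, h1]
    constructor
    · intro h2
      rw [← Quotient.out_eq q, Quotient.eq]
      exact Setoid.symm h2
    · intro h2
      have h3 : Quotient.mk a q.out = Quotient.mk a e := by rw [Quotient.out_eq, h2]
      exact Quotient.eq.mp h3
  rwa [hset] at h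

noncomputable def toCircuits (σ : {σ : Equiv.Perm E // Compat src tgt σ ∧ PS σ = a})
    (q : Quotient a) : Quot (RotRel src tgt a q) :=
  Quot.mk _ ⟨orbitList σ.1 q.out, isEulerianOn_orbit_block src tgt a σ.2.1 σ.2.2 q⟩

noncomputable def permOf (c : ∀ q : Quotient a, Quot (RotRel src tgt a q)) (q : Quotient a) :
    Equiv.Perm E :=
  Quot.liftOn (c q) (fun l => l.1.formPerm)
    (by
      rintro ⟨l₁, h₁⟩ ⟨l₂, h₂⟩ ⟨m, hm⟩
      simp only at hm ⊢
      rw [hm, List.formPerm_rotate _ h₁.1.2.1])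

lemma permOf_eq (c : ∀ q : Quotient a, Quot (RotRel src tgt a q)) (q : Quotient a)
    (l : {l : List E // IsEulerianOn src tgt {e | Quotient.mk a e = q} l})
    (h : c q = Quot.mk _ l) : permOf src tgt a c q = List.formPerm l.1 := by
  simp only [permOf, h]

lemma F_spec (c : ∀ q : Quotient a, Quot (RotRel src tgt a q)) (e : E) :
    Quotient.mk a (permOf src tgt a c (Quotient.mk a e) e) = Quotient.mk a e ∧
    src (permOf src tgt a c (Quotient.mk a e) e) = tgt e := by
  obtain ⟨l, hrep⟩ := Quot.exists_rep (c (Quotient.mk a e))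
  rw [permOf_eq src tgt a c _ l hrep.symm]
  have hmem : e ∈ l.1 := (l.2.2 e).mpr rfl
  rw [List.formPerm_apply_mem_eq_next l.2.1.2.1 e hmem]
  refine ⟨(l.2.2 _).mp (List.next_mem _ _ hmem), ?_⟩
  exact (tgt_eq_src_next l.2.1 hmem).symm

lemma F_injective (c : ∀ q : Quotient a, Quot (RotRel src tgt a q)) :
    Function.Injective (fun e => permOf src tgt a c (Quotient.mk a e) e) := by
  intro e f h
  simp only at h
  have h1 := (F_spec src tgt a c e).1
  have h2 := (F_spec src tgt a c f).1
  have hq : Quotient.mk a e = Quotient.mk a f := by rw [← h1, ← h2, h]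
  rw [hq] at h
  exact (permOf src tgt a c (Quotient.mk a f)).injective h

lemma next_agrees {c : ∀ q : Quotient a, Quot (RotRel src tgt a q)} {σ : Equiv.Perm E}
    (hσ : ∀ e, σ e = permOf src tgt a c (Quotient.mk a e) e)
    {q : Quotient a} {l : {l : List E // IsEulerianOn src tgt {e | Quotient.mk a e = q} l}}
    (hrep : c q = Quot.mk _ l) :
    ∀ e (he : e ∈ l.1), σ e = l.1.next e he := by
  intro e he
  have hq : Quotient.mk a e = q := (l.2.2 e).mp he
  rw [hσ e, hq, permOf_eq src tgt a c q l hrep,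
    List.formPerm_apply_mem_eq_next l.2.1.2.1 e he]

lemma blocks_of_agrees {c : ∀ q : Quotient a, Quot (RotRel src tgt a q)} {σ : Equiv.Perm E}
    (hσ : ∀ e, σ e = permOf src tgt a c (Quotient.mk a e) e) (n : ℕ) (x : E) :
    Quotient.mk a ((σ ^ n) x) = Quotient.mk a x := by
  induction n with
  | zero => simp
  | succ n ih =>
    rw [pow_succ', Equiv.Perm.mul_apply, hσ ((σ ^ n) x)]
    rw [(F_spec src tgt a c ((σ ^ n) x)).1, ih]

lemma PS_of_agrees {c : ∀ q : Quotient a, Quot (RotRel src tgt a q)} {σ : Equiv.Perm E}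
    (hσ : ∀ e, σ e = permOf src tgt a c (Quotient.mk a e) e) : PS σ = a := by
  apply Setoid.ext
  intro x y
  rw [show (PS σ) x y ↔ σ.SameCycle x y from Iff.rfl]
  constructor
  · intro h
    obtain ⟨i, _, rfl⟩ := h.exists_pow_eq'
    have := blocks_of_agrees src tgt a hσ i x
    exact Quotient.eq.mp this.symm
  · intro h
    have hq : Quotient.mk a y = Quotient.mk a x := Quotient.eq.mpr (Setoid.symm h)
    obtain ⟨l, hrep⟩ := Quot.exists_rep (c (Quotient.mk a x))
    have hnext := next_agrees src tgt a hσ hrep.symm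
    have hx : x ∈ l.1 := (l.2.2 x).mpr rfl
    have hy : y ∈ l.1 := (l.2.2 y).mpr hq
    obtain ⟨m, hm⟩ := orbitList_eq_rotate l.2.1.2.1 l.2.1.1 hnext hx
    have : y ∈ orbitList σ x := by rw [hm]; exact (List.mem_rotate).mpr hy
    exact mem_orbitList.mp this

noncomputable def ofCircuits (c : ∀ q : Quotient a, Quot (RotRel src tgt a q)) :
    {σ : Equiv.Perm E // Compat src tgt σ ∧ PS σ = a} :=
  ⟨Equiv.ofBijective (fun e => permOf src tgt a c (Quotient.mk a e) e)
      ((Finite.injective_iff_bijective).mp (F_injective src tgt a c)),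
    fun e => (F_spec src tgt a c e).2,
    PS_of_agrees src tgt a (fun _ => rfl)⟩

noncomputable def circuitsEquiv : {σ : Equiv.Perm E // Compat src tgt σ ∧ PS σ = a} ≃
    (∀ q : Quotient a, Quot (RotRel src tgt a q)) where
  toFun := toCircuits src tgt a
  invFun := ofCircuits src tgt a
  left_inv := by
    rintro ⟨σ, hc, hPS⟩
    apply Subtype.ext
    apply Equiv.ext
    intro e
    show permOf src tgt a (toCircuits src tgt a ⟨σ, hc, hPS⟩) (Quotient.mk a e) e = σ e
    set x := (Quotient.mk a e).out with hx
    rw [permOf_eq src tgt a _ (Quotient.mk a e)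
      ⟨orbitList σ x, isEulerianOn_orbit_block src tgt a hc hPS (Quotient.mk a e)⟩ rfl]
    have hmem : e ∈ orbitList σ x := by
      rw [mem_orbitList]
      have h1 : a.r x e := by
        have : Quotient.mk a x = Quotient.mk a e := Quotient.out_eq _
        exact Quotient.eq.mp this
      have hr : (PS σ).r = a.r := by rw [hPS]
      exact (iff_of_eq (congrFun (congrFun hr x) e)).mpr h1
    rw [List.formPerm_apply_mem_eq_next (orbitList_nodup σ x) e hmem,
      next_orbitList σ x e hmem]
  right_inv := by
    intro c
    funext q
    obtain ⟨l, hrep⟩ := Quot.exists_rep (c q)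
    set σ := ofCircuits src tgt a c with hσdef
    have hσ : ∀ e, σ.1 e = permOf src tgt a c (Quotient.mk a e) e := fun _ => rfl
    have hnext := next_agrees src tgt a hσ hrep.symm
    have hout : q.out ∈ l.1 := (l.2.2 q.out).mpr (Quotient.out_eq q)
    obtain ⟨m, hm⟩ := orbitList_eq_rotate l.2.1.2.1 l.2.1.1 hnext hout
    show Quot.mk _ ⟨orbitList σ.1 q.out, _⟩ = c q
    rw [← hrep]
    exact (Quot.sound ⟨m, hm⟩).symm

lemma card_compat_eq :
    Nat.card {σ : Equiv.Perm E // Compat src tgt σ ∧ PS σ = a} =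
      ∏ᶠ q : Quotient a, numEC src tgt {e | Quotient.mk a e = q} := by
  letI : Fintype (Quotient a) := Fintype.ofFinite _
  rw [Nat.card_congr (circuitsEquiv src tgt a), Nat.card_pi, finprod_eq_prod_of_fintype]
  rfl

end KeyA

section SignLemma

variable [Fintype E] [DecidableEq E]

noncomputable def quotPSEquiv (σ : Equiv.Perm E) :
    Quotient (PS σ) ≃ ({x : E // σ x = x} ⊕ {c : Equiv.Perm E // c ∈ σ.cycleFactorsFinset}) := by
  classical
  refine Equiv.ofBijective (Quotient.lift (fun x =>
    if h : σ x = x then Sum.inl ⟨x, h⟩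
    else Sum.inr ⟨σ.cycleOf x, Equiv.Perm.cycleOf_mem_cycleFactorsFinset_iff.mpr
      (Equiv.Perm.mem_support.mpr h)⟩) ?_) ⟨?_, ?_⟩
  · -- respects the relation
    intro x y (h : σ.SameCycle x y)
    by_cases hx : σ x = x
    · obtain ⟨i, hi⟩ := h
      rw [Equiv.Perm.zpow_apply_eq_self_of_apply_eq_self hx i] at hi
      subst hi
      rfl
    · have hy : ¬ σ y = y := by
        intro hy
        obtain ⟨i, hi⟩ := h.symm
        rw [Equiv.Perm.zpow_apply_eq_self_of_apply_eq_self hy i] at hi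
        exact hx (hi ▸ hy)
      simp only [dif_neg hx, dif_neg hy]
      exact congrArg _ (Subtype.ext (h.cycleOf_eq))
  · -- injective
    intro q1 q2
    refine Quotient.inductionOn₂ q1 q2 ?_
    intro x y h
    simp only [Quotient.lift_mk] at h
    by_cases hx : σ x = x <;> by_cases hy : σ y = y
    · rw [dif_pos hx, dif_pos hy] at h
      cases h
      rfl
    · rw [dif_pos hx, dif_neg hy] at h; exact absurd h (by simp)
    · rw [dif_neg hx, dif_pos hy] at h; exact absurd h (by simp)
    · rw [dif_neg hx, dif_neg hy] at h
      have hc : σ.cycleOf x = σ.cycleOf y := congrArg Subtype.val (Sum.inr_injective h)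
      have hsc : σ.SameCycle x y := by
        by_contra hns
        have h1 : σ.cycleOf x y = y := Equiv.Perm.cycleOf_apply_of_not_sameCycle hns
        rw [hc, Equiv.Perm.cycleOf_apply_self] at h1
        exact hy h1
      exact Quotient.sound hsc
  · -- surjective
    rintro (⟨x, hx⟩ | ⟨c, hc⟩)
    · exact ⟨Quotient.mk _ x, by simp [hx]⟩
    · have hcyc : c.IsCycle := (Equiv.Perm.mem_cycleFactorsFinset_iff.mp hc).1
      obtain ⟨x, hcx, -⟩ := hcyc
      have hxs : x ∈ c.support := Equiv.Perm.mem_support.mpr hcx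
      have hσx : σ x = c x := ((Equiv.Perm.mem_cycleFactorsFinset_iff.mp hc).2 x hxs).symm
      have hne : ¬ σ x = x := by rw [hσx]; exact hcx
      refine ⟨Quotient.mk _ x, ?_⟩
      simp only [Quotient.lift_mk, dif_neg hne]
      exact congrArg _ (Subtype.ext (Equiv.Perm.cycle_is_cycleOf hxs hc).symm)

lemma card_quotient_PS (σ : Equiv.Perm E) :
    Nat.card (Quotient (PS σ)) =
      (Fintype.card E - σ.support.card) + σ.cycleFactorsFinset.card := by
  classical
  rw [Nat.card_congr (quotPSEquiv σ)]
  rw [Nat.card_eq_fintype_card, Fintype.card_sum]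
  congr 1
  · have h1 : Fintype.card {x : E // σ x = x} =
        Fintype.card (Function.fixedPoints ⇑σ) := by
      apply Fintype.card_congr
      exact Equiv.subtypeEquivRight (fun x => Iff.rfl)
    rw [h1, Equiv.Perm.card_fixedPoints, Equiv.Perm.sum_cycleType]
  · exact Fintype.card_coe _

lemma card_cycleType_eq (σ : Equiv.Perm E) :
    Multiset.card σ.cycleType = σ.cycleFactorsFinset.card := by
  rw [Equiv.Perm.cycleType]
  simp

lemma neg_one_pow_card_quotient_PS (σ : Equiv.Perm E) :
    ((-1 : ℤ)) ^ (Nat.card (Quotient (PS σ))) =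
      (-1) ^ (Fintype.card E) * ((Equiv.Perm.sign σ : ℤˣ) : ℤ) := by
  have hs : ((Equiv.Perm.sign σ : ℤˣ) : ℤ) =
      (-1) ^ (σ.support.card + σ.cycleFactorsFinset.card) := by
    rw [Equiv.Perm.sign_of_cycleType, Equiv.Perm.sum_cycleType, card_cycleType_eq]
    rw [Units.val_pow_eq_pow_val]
    norm_num
  rw [card_quotient_PS, hs]
  obtain ⟨f, hf⟩ : ∃ f, Fintype.card E = f + σ.support.card :=
    ⟨Fintype.card E - σ.support.card, (Nat.sub_add_cancel (Finset.card_le_univ _)).symm⟩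
  rw [hf, Nat.add_sub_cancel]
  rw [← pow_add,
    show f + σ.support.card + (σ.support.card + σ.cycleFactorsFinset.card) =
      (f + σ.cycleFactorsFinset.card) + 2 * σ.support.card from by ring]
  conv_rhs => rw [pow_add, pow_mul, neg_one_sq, one_pow, mul_one]

end SignLemma

section Misc

instance finiteSetoid [Finite E] : Finite (Setoid E) := by
  have : Function.Injective (fun s : Setoid E => s.r) := by
    intro s t h
    cases s; cases t
    congr
  exact Finite.of_injective _ this

lemma exists_src_pair {src tgt : E → V} (hD : IsEulerianSet src tgt Set.univ)
    (hnc : ¬ IsCycleSet src tgt Set.univ) : ∃ x y : E, x ≠ y ∧ src x = src y := by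
  obtain ⟨l, hl⟩ := hD
  have h1 : ¬ (l.map src).Nodup := fun h => hnc ⟨l, hl, h⟩
  have hnd := hl.1.2.1
  by_contra hcon
  push_neg at hcon
  apply h1
  refine List.Nodup.map ?_ hnd
  intro x y h
  by_contra hne
  exact hcon x y hne h

lemma fk_eq_zero [Fintype E] {src tgt : E → V} {k : ℕ} (hk : Fintype.card E < k) :
    fk src tgt k = 0 := by
  rw [fk]
  have hempty : {a : Setoid E | EulerianPartition src tgt a ∧ Nat.card (Quotient a) = k} = ∅ := by
    ext a
    simp only [Set.mem_setOf_eq, Set.mem_empty_iff_false, iff_false, not_and]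
    intro _ hcard
    have hsurj : Function.Surjective (Quotient.mk a) := fun q => ⟨q.out, Quotient.out_eq q⟩
    have hle : Nat.card (Quotient a) ≤ Nat.card E :=
      Nat.card_le_card_of_surjective _ hsurj
    have h2 : Nat.card E = Fintype.card E := Nat.card_eq_fintype_card
    omega
  rw [hempty, finsum_mem_empty]

end Misc

end MartinAux


/-- For a connected Eulerian digraph `D` that is not a single directed cycle,
`∑_{k ≥ 1} (−1)^k f_k(D) = 0` (note `f_0(D) = 0`). -/
theorem alternating_sum_fk_eq_zero {V E : Type*} [Fintype V] [Fintype E]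
    (src tgt : E → V) (hD : IsEulerianSet src tgt Set.univ)
    (hnc : ¬ IsCycleSet src tgt Set.univ) :
    (∑ᶠ k : ℕ, (-1 : ℤ) ^ k * (fk src tgt k : ℤ)) = 0 := by
  classical
  obtain ⟨x0, y0, hxy, hsrc⟩ := MartinAux.exists_src_pair hD hnc
  letI : Fintype (Setoid E) := Fintype.ofFinite _
  set N := Fintype.card E with hN
  set W : Setoid E → ℕ :=
    fun a => ∏ᶠ q : Quotient a, numEC src tgt {e | Quotient.mk a e = q} with hW
  set EP : Finset (Setoid E) :=
    Finset.univ.filter (fun a => EulerianPartition src tgt a) with hEP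
  set CompatS : Finset (Equiv.Perm E) :=
    Finset.univ.filter (fun σ => MartinAux.Compat src tgt σ) with hCS
  have h1 : (∑ᶠ k : ℕ, (-1 : ℤ) ^ k * (fk src tgt k : ℤ)) =
      ∑ k ∈ Finset.range (N + 1), (-1 : ℤ) ^ k * (fk src tgt k : ℤ) := by
    apply finsum_eq_sum_of_support_subset
    intro k hk
    simp only [Function.mem_support] at hk
    simp only [Finset.coe_range, Set.mem_Iio]
    by_contra hlt
    push_neg at hlt
    rw [MartinAux.fk_eq_zero (by omega)] at hk
    simp at hk
  have hfk : ∀ k : ℕ, (fk src tgt k : ℤ) =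
      ∑ a ∈ EP.filter (fun a => Nat.card (Quotient a) = k), (W a : ℤ) := by
    intro k
    rw [fk]
    have hset : {a : Setoid E | EulerianPartition src tgt a ∧ Nat.card (Quotient a) = k} =
        ↑(EP.filter (fun a => Nat.card (Quotient a) = k)) := by
      ext a
      simp [hEP, Finset.mem_filter]
    rw [hset, finsum_mem_coe_finset]
    rw [Nat.cast_sum]
  have h3 : ∑ k ∈ Finset.range (N + 1), (-1 : ℤ) ^ k * (fk src tgt k : ℤ) =
      ∑ a ∈ EP, (-1 : ℤ) ^ (Nat.card (Quotient a)) * (W a : ℤ) := by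
    rw [← Finset.sum_fiberwise_of_maps_to (g := fun a : Setoid E => Nat.card (Quotient a))
      (t := Finset.range (N + 1)) ?_ (fun a => (-1 : ℤ) ^ (Nat.card (Quotient a)) * (W a : ℤ))]
    · refine Finset.sum_congr rfl (fun k _ => ?_)
      rw [hfk k, Finset.mul_sum]
      refine Finset.sum_congr rfl (fun a ha => ?_)
      rw [(Finset.mem_filter.mp ha).2]
    · intro a _
      rw [Finset.mem_range]
      show Nat.card (Quotient a) < N + 1
      have hsurj : Function.Surjective (Quotient.mk a) := fun q => ⟨q.out, Quotient.out_eq q⟩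
      have hle := Nat.card_le_card_of_surjective _ hsurj
      have h2 : Nat.card E = Fintype.card E := Nat.card_eq_fintype_card
      omega
  have h4 : ∀ a ∈ EP, (-1 : ℤ) ^ (Nat.card (Quotient a)) * (W a : ℤ) =
      ∑ σ ∈ CompatS.filter (fun σ => MartinAux.PS σ = a),
        (-1 : ℤ) ^ (Nat.card (Quotient (MartinAux.PS σ))) := by
    intro a _
    have hcard : (CompatS.filter (fun σ => MartinAux.PS σ = a)).card = W a := by
      have e1 : CompatS.filter (fun σ => MartinAux.PS σ = a) =
          Finset.univ.filter (fun σ => MartinAux.Compat src tgt σ ∧ MartinAux.PS σ = a) := by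
        rw [hCS, Finset.filter_filter]
      rw [e1]
      show _ = ∏ᶠ q : Quotient a, numEC src tgt {e | Quotient.mk a e = q}
      rw [← MartinAux.card_compat_eq src tgt a]
      rw [Nat.card_eq_fintype_card, Fintype.card_subtype]
    rw [Finset.sum_congr rfl (fun σ hσ => by
        rw [(Finset.mem_filter.mp hσ).2]), Finset.sum_const, hcard]
    rw [nsmul_eq_mul, mul_comm]
  have h5 : ∑ a ∈ EP, ∑ σ ∈ CompatS.filter (fun σ => MartinAux.PS σ = a),
        (-1 : ℤ) ^ (Nat.card (Quotient (MartinAux.PS σ))) =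
      ∑ σ ∈ CompatS, (-1 : ℤ) ^ (Nat.card (Quotient (MartinAux.PS σ))) := by
    apply Finset.sum_fiberwise_of_maps_to
    intro σ hσ
    rw [hEP, Finset.mem_filter]
    rw [hCS, Finset.mem_filter] at hσ
    exact ⟨Finset.mem_univ _, MartinAux.eulerianPartition_PS hσ.2⟩
  have h6 : ∑ σ ∈ CompatS, (-1 : ℤ) ^ (Nat.card (Quotient (MartinAux.PS σ))) =
      (-1 : ℤ) ^ N * ∑ σ ∈ CompatS, ((Equiv.Perm.sign σ : ℤˣ) : ℤ) := by
    rw [Finset.mul_sum]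
    exact Finset.sum_congr rfl (fun σ _ => MartinAux.neg_one_pow_card_quotient_PS σ)
  have h7 : ∑ σ ∈ CompatS, ((Equiv.Perm.sign σ : ℤˣ) : ℤ) = 0 := by
    refine Finset.sum_involution (fun σ _ => Equiv.swap x0 y0 * σ) ?_ ?_ ?_ ?_
    · intro σ _
      show ((Equiv.Perm.sign σ : ℤˣ) : ℤ) + ((Equiv.Perm.sign (Equiv.swap x0 y0 * σ) : ℤˣ) : ℤ) = 0
      have hsg : Equiv.Perm.sign (Equiv.swap x0 y0 * σ) = - Equiv.Perm.sign σ := by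
        rw [Equiv.Perm.sign_mul, Equiv.Perm.sign_swap hxy, neg_one_mul]
      rw [hsg]
      simp
    · intro σ _ _ heq
      have heq : Equiv.swap x0 y0 * σ = σ := heq
      have h1 : Equiv.swap x0 y0 = 1 := by
        have h2 : Equiv.swap x0 y0 * σ = 1 * σ := by rw [heq, one_mul]
        exact mul_right_cancel h2
      have h3 := Equiv.ext_iff.mp h1 x0
      rw [Equiv.swap_apply_left] at h3
      simp only [Equiv.Perm.one_apply] at h3
      exact hxy h3.symm
    · intro σ hσ
      show Equiv.swap x0 y0 * σ ∈ CompatS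
      rw [hCS, Finset.mem_filter] at hσ ⊢
      refine ⟨Finset.mem_univ _, fun e => ?_⟩
      rw [Equiv.Perm.mul_apply]
      have hsw : ∀ z, src (Equiv.swap x0 y0 z) = src z := by
        intro z
        rcases eq_or_ne z x0 with rfl | hz1
        · rw [Equiv.swap_apply_left]; exact hsrc.symm
        rcases eq_or_ne z y0 with rfl | hz2
        · rw [Equiv.swap_apply_right]; exact hsrc
        · rw [Equiv.swap_apply_of_ne_of_ne hz1 hz2]
      rw [hsw]
      exact hσ.2 e
    · intro σ _
      show Equiv.swap x0 y0 * (Equiv.swap x0 y0 * σ) = σ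
      rw [← mul_assoc, Equiv.swap_mul_self, one_mul]
  rw [h1, h3, Finset.sum_congr rfl h4, h5, h6, h7, mul_zero]
end

section
/- Let X be a Veblen multigraph of rank 2 (every vertex has even degree), and let 𝔠(X) denote the set of Eulerian circuits of X. Then the associated coefficient satisfies C_X = |𝔠(X)| / M_X, where M_X = ∏ over parallel classes of edges of (multiplicity)!. -/
/-- `l` is an Eulerian closed trail of the sub-multigraph with edge set `A` of the
undirected multigraph with edge type `E` and endpoints map `ends : E → Sym2 V`. Each
entry records an edge together with the direction `(u, v)` in which it is traversed. -/
def IsUEulerianOn {V E : Type*} (ends : E → Sym2 V) (A : Set E)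
    (l : List (E × V × V)) : Prop :=
  l ≠ [] ∧ (l.map Prod.fst).Nodup ∧
  (∀ d ∈ l, Sym2.mk d.2.1 d.2.2 = ends d.1) ∧
  List.Chain' (fun d d' : E × V × V => d.2.2 = d'.2.1) l ∧
  (∀ h : l ≠ [], (l.getLast h).2.2 = (l.head h).2.1) ∧
  (∀ e : E, e ∈ l.map Prod.fst ↔ e ∈ A)

/-- The number of Eulerian circuits of the sub-multigraph with edge set `A`: Eulerian
closed trails up to cyclic rotation. -/
noncomputable def numUEC {V E : Type*} (ends : E → Sym2 V) (A : Set E) : ℕ :=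
  Nat.card (Quot fun l₁ l₂ : {l : List (E × V × V) // IsUEulerianOn ends A l} =>
    ∃ m, (l₂ : List (E × V × V)) = (l₁ : List (E × V × V)).rotate m)

/-- `M_A = ∏ (multiplicity of a parallel class of edges of A)!`. -/
noncomputable def Mfact {V E : Type*} [Fintype V] [DecidableEq V]
    (ends : E → Sym2 V) (A : Set E) : ℕ :=
  ∏ w : Sym2 V, (Nat.card {e : E // e ∈ A ∧ ends e = w}).factorial

/-- `N_D = ∏_v (outdeg v)!` for the orientation `o`. -/
noncomputable def Nfact {V E : Type*} [Fintype V] (o : E → V × V) : ℕ :=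
  ∏ v : V, (Nat.card {e : E // (o e).1 = v}).factorial

/-- `K_D = ∏_{(u,v)} m(u,v)!` for the orientation `o`. -/
noncomputable def Kfact {V E : Type*} [Fintype V] [DecidableEq V] (o : E → V × V) : ℕ :=
  ∏ p : V × V, (Nat.card {e : E // o e = p}).factorial

/-- Two orientations are `≈`-equivalent if they have the same arc multiplicities. -/
def ApproxEq {V E : Type*} (o o' : E → V × V) : Prop :=
  ∀ p : V × V, Nat.card {e : E // o e = p} = Nat.card {e : E // o' e = p}

set_option linter.unusedSectionVars false

private lemma nodup_fst_eq {α β : Type*} {f : α → β} {l : List α} (h : (l.map f).Nodup)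
    {d d' : α} (hd : d ∈ l) (hd' : d' ∈ l) (he : f d = f d') : d = d' :=
  List.inj_on_of_nodup_map h hd hd' he

private lemma exists_perm_comp_eq {E W : Type*} [Finite E] (f g : E → W)
    (h : ∀ w, Nat.card {e : E // f e = w} = Nat.card {e : E // g e = w}) :
    ∃ π : Equiv.Perm E, ∀ e, g (π e) = f e := by
  have hne : ∀ w, Nonempty ({e : E // f e = w} ≃ {e : E // g e = w}) := fun w =>
    Finite.card_eq.mp (h w)
  let u : ∀ w, {e : E // f e = w} ≃ {e : E // g e = w} := fun w => (hne w).some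
  exact ⟨(Equiv.sigmaFiberEquiv f).symm.trans
    ((Equiv.sigmaCongrRight u).trans (Equiv.sigmaFiberEquiv g)),
    fun e => (u (f e) ⟨e, rfl⟩).2⟩

private lemma card_fiber_perm {E W : Type*} [Fintype E] [Fintype W] (f : E → W) :
    Nat.card {π : Equiv.Perm E // ∀ e, f (π e) = f e}
      = ∏ w : W, (Nat.card {e : E // f e = w}).factorial := by
  classical
  have h1 : {π : Equiv.Perm E // ∀ e, f (π e) = f e} ≃ {π : Equiv.Perm E // f ∘ π = f} :=
    Equiv.subtypeEquivRight fun π => ⟨fun h => funext h, fun h e => congrFun h e⟩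
  rw [Nat.card_congr h1, Nat.card_eq_fintype_card, DomMulAct.stabilizer_card]
  exact Finset.prod_congr rfl fun w _ => by rw [Nat.card_eq_fintype_card]

private lemma nat_card_sigma {ι : Type*} [Fintype ι] (β : ι → Type*) [∀ i, Finite (β i)] :
    Nat.card (Σ i, β i) = ∑ i : ι, Nat.card (β i) := by
  letI : ∀ i, Fintype (β i) := fun i => Fintype.ofFinite _
  rw [Nat.card_eq_fintype_card, Fintype.card_sigma]
  exact Finset.sum_congr rfl fun i _ => (Nat.card_eq_fintype_card).symm



section Transfer

variable {V E : Type*}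

private lemma isEulerianOn_map {o o' : E → V × V} (π : Equiv.Perm E)
    (hπ : ∀ e, o' (π e) = o e) {l : List E}
    (hl : IsEulerianOn (fun e => (o e).1) (fun e => (o e).2) Set.univ l) :
    IsEulerianOn (fun e => (o' e).1) (fun e => (o' e).2) Set.univ (l.map π) := by
  obtain ⟨⟨hne, hnd, hch, hlh⟩, hmem⟩ := hl
  refine ⟨⟨by simpa using hne, hnd.map π.injective, ?_, ?_⟩, fun e => ?_⟩
  · simp only [List.Chain', List.isChain_map] at hch ⊢
    exact hch.imp fun a b h => by simp only [hπ]; exact h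
  · intro h
    rw [List.getLast_map, List.head_map]
    simp only [hπ]
    exact hlh (by simpa using h)
  · simp only [Set.mem_univ, iff_true]
    exact List.mem_map.mpr ⟨π.symm e, (hmem _).mpr (Set.mem_univ _), π.apply_symm_apply e⟩

private lemma numEC_congr {o o' : E → V × V} (π : Equiv.Perm E)
    (hπ : ∀ e, o' (π e) = o e) :
    numEC (fun e => (o e).1) (fun e => (o e).2) Set.univ
      = numEC (fun e => (o' e).1) (fun e => (o' e).2) Set.univ := by
  have hπ' : ∀ e, o (π.symm e) = o' e := fun e => by
    rw [← hπ (π.symm e), π.apply_symm_apply]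
  let F : {l : List E // IsEulerianOn (fun e => (o e).1) (fun e => (o e).2) Set.univ l}
      ≃ {l : List E // IsEulerianOn (fun e => (o' e).1) (fun e => (o' e).2) Set.univ l} :=
    { toFun := fun l => ⟨l.1.map π, isEulerianOn_map π hπ l.2⟩
      invFun := fun l => ⟨l.1.map π.symm, isEulerianOn_map π.symm hπ' l.2⟩
      left_inv := fun l => Subtype.ext (by
        simp only [List.map_map, Equiv.symm_comp_self, List.map_id])
      right_inv := fun l => Subtype.ext (by
        simp only [List.map_map, Equiv.self_comp_symm, List.map_id]) }
  refine Nat.card_congr (Quot.congr F fun l₁ l₂ => ?_)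
  constructor
  · rintro ⟨m, hm⟩
    exact ⟨m, by simp only [F, Equiv.coe_fn_mk, hm, List.map_rotate]⟩
  · rintro ⟨m, hm⟩
    refine ⟨m, ?_⟩
    have h2 : List.map (π : E → E) l₂.1 = List.map (π : E → E) (l₁.1.rotate m) := by
      rw [List.map_rotate]; exact hm
    exact (List.map_injective_iff.mpr π.injective) h2

private lemma numEC_eq_zero {o : E → V × V}
    (h : ¬ IsEulerianSet (fun e => (o e).1) (fun e => (o e).2) Set.univ) :
    numEC (fun e => (o e).1) (fun e => (o e).2) Set.univ = 0 := by
  have he : IsEmpty {l : List E //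
      IsEulerianOn (fun e => (o e).1) (fun e => (o e).2) Set.univ l} :=
    ⟨fun l => h ⟨l.1, l.2⟩⟩
  have : IsEmpty (Quot fun l₁ l₂ : {l : List E //
      IsEulerianOn (fun e => (o e).1) (fun e => (o e).2) Set.univ l} =>
      ∃ m, (l₂ : List E) = (l₁ : List E).rotate m) :=
    ⟨fun q => by induction q using Quot.ind with | _ a => exact (he.false a).elim⟩
  exact Nat.card_of_isEmpty

private lemma isEulerianSet_congr {o o' : E → V × V} (π : Equiv.Perm E)
    (hπ : ∀ e, o' (π e) = o e)
    (h : IsEulerianSet (fun e => (o e).1) (fun e => (o e).2) Set.univ) :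
    IsEulerianSet (fun e => (o' e).1) (fun e => (o' e).2) Set.univ :=
  h.elim fun l hl => ⟨l.map π, isEulerianOn_map π hπ hl⟩

private lemma finite_isEulerianOn [Finite E] (src tgt : E → V) :
    Finite {l : List E // IsEulerianOn src tgt Set.univ l} := by
  cases nonempty_fintype E
  refine (Set.Finite.subset (List.finite_length_le E (Fintype.card E)) ?_).to_subtype
  intro l hl
  exact hl.1.2.1.length_le_card

end Transfer

section Decomp

variable {V E : Type*}

private abbrev OT (ends : E → Sym2 V) := {o : E → V × V // ∀ e, Sym2.mk (o e).1 (o e).2 = ends e}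

private lemma psi_iff (ends : E → Sym2 V) (o : OT ends) (m : List E) :
    IsUEulerianOn ends Set.univ (m.map fun e => (e, o.1 e))
      ↔ IsEulerianOn (fun e => (o.1 e).1) (fun e => (o.1 e).2) Set.univ m := by
  have hfst : (m.map fun e => (e, o.1 e)).map Prod.fst = m := by
    rw [List.map_map]; exact List.map_id m
  constructor
  · rintro ⟨hne, hnd, -, hch, hlh, hmem⟩
    rw [hfst] at hnd
    refine ⟨⟨by simpa using hne, hnd, ?_, ?_⟩, fun e => by rw [← hfst]; exact hmem e⟩
    · simp only [List.Chain', List.isChain_map] at hch ⊢; exact hch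
    · intro h
      have := hlh (by simpa using h)
      rwa [List.getLast_map, List.head_map] at this
  · rintro ⟨⟨hne, hnd, hch, hlh⟩, hmem⟩
    refine ⟨by simpa using hne, by rwa [hfst], ?_, ?_, ?_, fun e => by rw [hfst]; exact hmem e⟩
    · intro d hd
      obtain ⟨e, he, rfl⟩ := List.mem_map.mp hd
      exact o.2 e
    · simp only [List.Chain', List.isChain_map] at hch ⊢; exact hch
    · intro h
      rw [List.getLast_map, List.head_map]
      exact hlh (by simpa using h)

private lemma psi_inj {o o' : E → V × V} {m m' : List E}
    (hm : ∀ e : E, e ∈ m) (h : (m.map fun e => (e, o e)) = (m'.map fun e => (e, o' e))) :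
    o = o' ∧ m = m' := by
  have hmm : m = m' := by
    have h2 := congrArg (List.map Prod.fst) h
    rw [List.map_map, List.map_map] at h2
    rw [← List.map_id m, ← List.map_id m']
    exact h2
  subst hmm
  refine ⟨funext fun e => ?_, rfl⟩
  have he : (e, o e) ∈ m.map fun e => (e, o e) := List.mem_map_of_mem (hm e)
  rw [h] at he
  obtain ⟨a, -, ha⟩ := List.mem_map.mp he
  have h1 : a = e := congrArg Prod.fst ha
  subst h1
  exact (congrArg Prod.snd ha).symm

private lemma psi_surj (ends : E → Sym2 V) {l : List (E × V × V)}
    (hl : IsUEulerianOn ends Set.univ l) :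
    ∃ p : Σ o : OT ends, {m : List E //
        IsEulerianOn (fun e => (o.1 e).1) (fun e => (o.1 e).2) Set.univ m},
      (p.2.1.map fun e => (e, p.1.1 e)) = l := by
  obtain ⟨hne, hnd, hsym, hch, hlh, hmem⟩ := hl
  have hex : ∀ e : E, ∃ d, d ∈ l ∧ d.1 = e := fun e => by
    obtain ⟨d, hd, hde⟩ := List.mem_map.mp ((hmem e).mpr (Set.mem_univ e))
    exact ⟨d, hd, hde⟩
  choose dfun hdmem hdfst using hex
  have hoends : ∀ e, Sym2.mk (dfun e).2.1 (dfun e).2.2 = ends e := fun e => by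
    rw [hsym _ (hdmem e), hdfst]
  have hpsi : ((l.map Prod.fst).map fun e => (e, (dfun e).2)) = l := by
    rw [List.map_map]
    conv_rhs => rw [← List.map_id l]
    refine List.map_congr_left fun d hd => ?_
    have hdd : dfun d.1 = d := nodup_fst_eq hnd (hdmem d.1) hd (by rw [hdfst])
    show (d.1, (dfun d.1).2) = d
    rw [hdd]
  refine ⟨⟨⟨fun e => (dfun e).2, hoends⟩, ⟨l.map Prod.fst, ?_⟩⟩, hpsi⟩
  exact (psi_iff ends ⟨fun e => (dfun e).2, hoends⟩ (l.map Prod.fst)).mp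
    (by rw [hpsi]; exact ⟨hne, hnd, hsym, hch, hlh, hmem⟩)

end Decomp

section Main

variable {V E : Type*} [Fintype V] [DecidableEq V] [Fintype E]

private lemma finite_isEulerianOn' [Finite E] {W : Type*} (src tgt : E → W) :
    Finite {l : List E // IsEulerianOn src tgt Set.univ l} := by
  cases nonempty_fintype E
  refine (Set.Finite.subset (List.finite_length_le E (Fintype.card E)) ?_).to_subtype
  intro l hl
  exact hl.1.2.1.length_le_card

private lemma finite_isUEulerianOn (ends : E → Sym2 V) [Finite V] :
    Finite {l : List (E × V × V) // IsUEulerianOn ends Set.univ l} := by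
  cases nonempty_fintype E
  refine (Set.Finite.subset (List.finite_length_le (E × V × V) (Fintype.card E)) ?_).to_subtype
  intro l hl
  have h2 := hl.2.1.length_le_card
  simpa using h2

private lemma numUEC_eq_sum (ends : E → Sym2 V) [Fintype (OT ends)] :
    numUEC ends Set.univ
      = ∑ o : OT ends, numEC (fun e => (o.1 e).1) (fun e => (o.1 e).2) Set.univ := by
  classical
  haveI hfinD : ∀ o : OT ends, Finite {m : List E //
      IsEulerianOn (fun e => (o.1 e).1) (fun e => (o.1 e).2) Set.univ m} :=
    fun o => finite_isEulerianOn' _ _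
  have key : Nat.card (Quot fun l₁ l₂ :
        {l : List (E × V × V) // IsUEulerianOn ends Set.univ l} =>
        ∃ m, (l₂ : List (E × V × V)) = (l₁ : List (E × V × V)).rotate m)
      = Nat.card (Σ o : OT ends, Quot fun m₁ m₂ : {m : List E //
          IsEulerianOn (fun e => (o.1 e).1) (fun e => (o.1 e).2) Set.univ m} =>
          ∃ k, (m₂ : List E) = (m₁ : List E).rotate k) := by
    apply Nat.card_congr
    have hP : ∀ l : {l : List (E × V × V) // IsUEulerianOn ends Set.univ l},
        (((psi_surj ends l.2).choose.2.1).map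
          fun e => (e, (psi_surj ends l.2).choose.1.1 e)) = l.1 :=
      fun l => (psi_surj ends l.2).choose_spec
    have hmem2 : ∀ (l : {l : List (E × V × V) // IsUEulerianOn ends Set.univ l}) (e : E),
        e ∈ (psi_surj ends l.2).choose.2.1 :=
      fun l e => (((psi_surj ends l.2).choose.2.2).2 e).mpr (Set.mem_univ e)
    have hsig : ∀ (o₁ : OT ends) (m₁ : {m : List E //
          IsEulerianOn (fun e => (o₁.1 e).1) (fun e => (o₁.1 e).2) Set.univ m})
        (o₂ : OT ends) (m₂ : {m : List E //
          IsEulerianOn (fun e => (o₂.1 e).1) (fun e => (o₂.1 e).2) Set.univ m}),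
        o₂ = o₁ → (∃ k, m₂.1 = m₁.1.rotate k) →
        (⟨o₁, Quot.mk _ m₁⟩ : Σ o : OT ends, Quot fun m₁ m₂ : {m : List E //
          IsEulerianOn (fun e => (o.1 e).1) (fun e => (o.1 e).2) Set.univ m} =>
          ∃ k, (m₂ : List E) = (m₁ : List E).rotate k)
          = ⟨o₂, Quot.mk _ m₂⟩ := by
      rintro o₁ m₁ o₂ m₂ rfl hk
      exact congrArg (Sigma.mk o₂) (Quot.sound hk)
    refine
      { toFun := Quot.lift
          (fun l => ⟨(psi_surj ends l.2).choose.1, Quot.mk _ (psi_surj ends l.2).choose.2⟩) ?_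
        invFun := fun x => Quot.lift
          (fun m => Quot.mk _ ⟨m.1.map fun e => (e, x.1.1 e),
            (psi_iff ends x.1 m.1).mpr m.2⟩) ?_ x.2
        left_inv := ?_
        right_inv := ?_ }
    · -- respects rotation, forward
      rintro l₁ l₂ ⟨k, hk⟩
      have h1 : (((psi_surj ends l₂.2).choose.2.1).map
            fun e => (e, (psi_surj ends l₂.2).choose.1.1 e))
          = (((psi_surj ends l₁.2).choose.2.1).rotate k).map
            fun e => (e, (psi_surj ends l₁.2).choose.1.1 e) := by
        rw [hP l₂, List.map_rotate, hP l₁]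
        exact hk
      obtain ⟨ho, hm⟩ := psi_inj (hmem2 l₂) h1
      exact hsig _ _ _ _ (Subtype.ext ho) ⟨k, hm⟩
    · -- respects rotation, backward
      rintro m₁ m₂ ⟨k, hk⟩
      apply Quot.sound
      refine ⟨k, ?_⟩
      show List.map _ (m₂ : List E) = (List.map _ (m₁ : List E)).rotate k
      rw [hk, List.map_rotate]
    · -- left inverse
      intro q
      induction q using Quot.ind with
      | _ l =>
        apply congrArg (Quot.mk _)
        exact Subtype.ext (hP l)
    · -- right inverse
      rintro ⟨o, q⟩
      induction q using Quot.ind with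
      | _ m =>
        obtain ⟨ho, hm⟩ := psi_inj
          (hmem2 ⟨m.1.map fun e => (e, o.1 e), (psi_iff ends o m.1).mpr m.2⟩)
          (hP ⟨m.1.map fun e => (e, o.1 e), (psi_iff ends o m.1).mpr m.2⟩)
        exact hsig _ _ _ _ (Subtype.ext ho).symm ⟨0, by rw [List.rotate_zero, hm]⟩
  rw [numUEC, key, nat_card_sigma]
  rfl

end Main

section Count

variable {V E : Type*} [Fintype V] [DecidableEq V] [Fintype E]

private lemma card_class_mul_kfact (ends : E → Sym2 V) (r : OT ends) :
    Nat.card {o' : OT ends // ApproxEq r.1 o'.1} * Kfact r.1 = Mfact ends Set.univ := by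
  classical
  have hG : Nat.card {π : Equiv.Perm E // ∀ e, ends (π e) = ends e} = Mfact ends Set.univ := by
    rw [card_fiber_perm, Mfact]
    refine Finset.prod_congr rfl fun w _ => ?_
    congr 1
    exact Nat.card_congr (Equiv.subtypeEquivRight fun e => by simp)
  set Φ : {π : Equiv.Perm E // ∀ e, ends (π e) = ends e} → {o' : OT ends // ApproxEq r.1 o'.1} :=
    fun π => ⟨⟨fun e => r.1 (π.1 e), fun e => by rw [r.2, π.2]⟩, fun p =>
      (Nat.card_congr (Equiv.subtypeEquiv π.1.symm fun a => by
          rw [Equiv.apply_symm_apply]) :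
        Nat.card {e : E // r.1 e = p} = Nat.card {e : E // r.1 (π.1 e) = p})⟩ with hΦdef
  have hfib : ∀ o' : {o' : OT ends // ApproxEq r.1 o'.1},
      Nat.card {π : {π : Equiv.Perm E // ∀ e, ends (π e) = ends e} // Φ π = o'}
        = Kfact r.1 := by
    intro o'
    obtain ⟨π₀, hπ₀⟩ := exists_perm_comp_eq o'.1.1 r.1 fun p => (o'.2 p).symm
    have hπ₀G : ∀ e, ends (π₀ e) = ends e := fun e => by
      rw [← r.2 (π₀ e), hπ₀ e, o'.1.2 e]
    have he : {π : {π : Equiv.Perm E // ∀ e, ends (π e) = ends e} // Φ π = o'}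
        ≃ {τ : Equiv.Perm E // ∀ e, o'.1.1 (τ e) = o'.1.1 e} := by
      refine
        { toFun := fun π => ⟨π.1.1.trans π₀.symm, fun e => ?_⟩
          invFun := fun τ => ⟨⟨τ.1.trans π₀, fun e => ?_⟩, ?_⟩
          left_inv := fun π => ?_
          right_inv := fun τ => ?_ }
      · -- o' (π₀.symm (π e)) = o' e
        have hfun : (fun e => r.1 (π.1.1 e)) = o'.1.1 := congrArg (fun x => x.1.1) π.2
        have h1 := hπ₀ (π₀.symm (π.1.1 e))
        rw [Equiv.apply_symm_apply] at h1
        show o'.1.1 (π₀.symm (π.1.1 e)) = o'.1.1 e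
        rw [← h1, congrFun hfun e]
      · -- ends (π₀ (τ e)) = ends e
        show ends (π₀ (τ.1 e)) = ends e
        rw [hπ₀G, ← o'.1.2 (τ.1 e), τ.2 e, o'.1.2 e]
      · -- Φ (τ.trans π₀) = o'
        refine Subtype.ext (Subtype.ext (funext fun e => ?_))
        show r.1 (π₀ (τ.1 e)) = o'.1.1 e
        rw [hπ₀ (τ.1 e), τ.2 e]
      · exact Subtype.ext (Subtype.ext (Equiv.ext fun e => by simp))
      · exact Subtype.ext (Equiv.ext fun e => by simp)
    rw [Nat.card_congr he, card_fiber_perm, Kfact]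
    refine Finset.prod_congr rfl fun p _ => ?_
    rw [o'.2 p]
  letI : Fintype {o' : OT ends // ApproxEq r.1 o'.1} := Fintype.ofFinite _
  rw [← hG, Nat.card_congr (Equiv.sigmaFiberEquiv Φ).symm, nat_card_sigma]
  rw [Finset.sum_congr rfl fun o' _ => hfib o', Finset.sum_const, Finset.card_univ,
    smul_eq_mul, Nat.card_eq_fintype_card]

end Count


/-- For a Veblen multigraph `X` of rank 2 (no loops, all degrees even), the associated
coefficient satisfies `C_X = |𝔠(X)| / M_X`: summing `|R| · |𝔠(D_R)| / N_{D_R}` (with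
`|R| = N_{D_R}/K_{D_R}`) over a transversal `Reps` of the Eulerian orientations of `X`
up to `≈` gives the number of Eulerian circuits of `X` divided by
`M_X = ∏ (edge multiplicities)!`. -/
theorem assoc_coeff_eq_eulerian_div_M {V E : Type*} [Fintype V] [DecidableEq V]
    [Fintype E] (ends : E → Sym2 V)
    (hloop : ∀ e, ¬ (ends e).IsDiag)
    (hveblen : ∀ v : V, Even (Nat.card {e : E // v ∈ ends e}))
    (Reps : Finset {o : E → V × V // ∀ e, Sym2.mk (o e).1 (o e).2 = ends e})
    (hEul : ∀ o ∈ Reps,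
      IsEulerianSet (fun e => (o.1 e).1) (fun e => (o.1 e).2) Set.univ)
    (htrans : ∀ o' : {o : E → V × V // ∀ e, Sym2.mk (o e).1 (o e).2 = ends e},
      IsEulerianSet (fun e => (o'.1 e).1) (fun e => (o'.1 e).2) Set.univ →
        ∃! o, o ∈ Reps ∧ ApproxEq o.1 o'.1) :
    (∑ o ∈ Reps, ((Nfact o.1 : ℚ) / (Kfact o.1 : ℚ)) *
        ((numEC (fun e => (o.1 e).1) (fun e => (o.1 e).2) Set.univ : ℚ) /
          (Nfact o.1 : ℚ))) =
      (numUEC ends Set.univ : ℚ) / (Mfact ends Set.univ : ℚ) := by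
  classical
  have hKpos : ∀ o : E → V × V, 0 < Kfact o := fun o =>
    Finset.prod_pos fun p _ => Nat.factorial_pos _
  have hNpos : ∀ o : E → V × V, 0 < Nfact o := fun o =>
    Finset.prod_pos fun v _ => Nat.factorial_pos _
  have hMpos : 0 < Mfact ends Set.univ := Finset.prod_pos fun w _ => Nat.factorial_pos _
  have hApproxEC : ∀ r o' : OT ends, ApproxEq r.1 o'.1 →
      numEC (fun e => (r.1 e).1) (fun e => (r.1 e).2) Set.univ
        = numEC (fun e => (o'.1 e).1) (fun e => (o'.1 e).2) Set.univ := by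
    intro r o' h
    obtain ⟨π, hπ⟩ := exists_perm_comp_eq r.1 o'.1 h
    exact numEC_congr π hπ
  have hApproxEul : ∀ r o' : OT ends, ApproxEq r.1 o'.1 →
      IsEulerianSet (fun e => (r.1 e).1) (fun e => (r.1 e).2) Set.univ →
      IsEulerianSet (fun e => (o'.1 e).1) (fun e => (o'.1 e).2) Set.univ := by
    intro r o' h hE
    obtain ⟨π, hπ⟩ := exists_perm_comp_eq r.1 o'.1 h
    exact isEulerianSet_congr π hπ hE
  have hcount : numUEC ends Set.univ
      = ∑ r ∈ Reps, (Finset.univ.filter fun o' : OT ends => ApproxEq r.1 o'.1).card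
          * numEC (fun e => (r.1 e).1) (fun e => (r.1 e).2) Set.univ := by
    rw [numUEC_eq_sum ends]
    rw [← Finset.sum_subset (Finset.subset_univ
      (Reps.biUnion fun r => Finset.univ.filter fun o' : OT ends => ApproxEq r.1 o'.1))
      ?_]
    · rw [Finset.sum_biUnion ?_]
      · refine Finset.sum_congr rfl fun r hr => ?_
        rw [Finset.sum_congr rfl fun o' ho' =>
            (hApproxEC r o' (Finset.mem_filter.mp ho').2).symm,
          Finset.sum_const, smul_eq_mul]
      · intro r hr s hs hrs
        simp only [Function.onFun]
        rw [Finset.disjoint_left]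
        intro o' hor hos
        rw [Finset.mem_coe] at hr hs
        exact hrs ((htrans o' (hApproxEul r o' (Finset.mem_filter.mp hor).2 (hEul r hr))).unique
          ⟨hr, (Finset.mem_filter.mp hor).2⟩ ⟨hs, (Finset.mem_filter.mp hos).2⟩)
    · intro o' _ ho'
      by_contra hne
      have hEulo' : IsEulerianSet (fun e => (o'.1 e).1) (fun e => (o'.1 e).2) Set.univ := by
        by_contra h'
        exact hne (numEC_eq_zero h')
      obtain ⟨rr, ⟨hrR, hrA⟩, -⟩ := htrans o' hEulo'
      exact ho' (Finset.mem_biUnion.mpr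
        ⟨rr, hrR, Finset.mem_filter.mpr ⟨Finset.mem_univ _, hrA⟩⟩)
  have hclassK : ∀ r : OT ends,
      ((Finset.univ.filter fun o' : OT ends => ApproxEq r.1 o'.1).card) * Kfact r.1
        = Mfact ends Set.univ := by
    intro r
    rw [← card_class_mul_kfact ends r]
    congr 1
    rw [Nat.card_eq_fintype_card, Fintype.card_subtype]
  have hterm : ∀ r ∈ Reps, ((Nfact r.1 : ℚ) / (Kfact r.1 : ℚ)) *
        ((numEC (fun e => (r.1 e).1) (fun e => (r.1 e).2) Set.univ : ℚ) /
          (Nfact r.1 : ℚ))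
      = (((Finset.univ.filter fun o' : OT ends => ApproxEq r.1 o'.1).card : ℚ)
          * (numEC (fun e => (r.1 e).1) (fun e => (r.1 e).2) Set.univ : ℚ))
          / (Mfact ends Set.univ : ℚ) := by
    intro r _
    have hK : (Kfact r.1 : ℚ) ≠ 0 := Nat.cast_ne_zero.mpr (hKpos r.1).ne'
    have hN : (Nfact r.1 : ℚ) ≠ 0 := Nat.cast_ne_zero.mpr (hNpos r.1).ne'
    have hM : (Mfact ends Set.univ : ℚ) ≠ 0 := Nat.cast_ne_zero.mpr hMpos.ne'
    have hck : (((Finset.univ.filter fun o' : OT ends => ApproxEq r.1 o'.1).card : ℚ))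
        * (Kfact r.1 : ℚ) = (Mfact ends Set.univ : ℚ) := by
      rw [← Nat.cast_mul, hclassK r]
    rw [div_mul_div_comm, mul_comm (Kfact r.1 : ℚ) (Nfact r.1 : ℚ),
      mul_div_mul_left _ _ hN, div_eq_div_iff hK hM, ← hck]
    ring
  rw [Finset.sum_congr rfl hterm, ← Finset.sum_div, hcount]
  push_cast
  ring
end
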